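/- arXiv:2507.15534 — 9 statements merged into one kernel-verified Lean document; each statement's English description precedes it below -/
import Mathlib

section
/- For every nonzero vector v ∈ ℂ², there exists a unique β ∈ [-1,1] such that R·v lies in the ℂ-linear span of the vector (1, iβ) for some R ∈ SO(2). -/
open Matrix Complex

lemma key_unique (a b : ℂ) (hab : ¬(a = 0 ∧ b = 0)) (c s β' : ℝ)
    (hcs : c^2 + s^2 = 1) (hβ1 : -1 ≤ β') (hβ2 : β' ≤ 1)
    (hrel : (s:ℂ)*a + (c:ℂ)*b = Complex.I * (β':ℂ) * ((c:ℂ)*a - (s:ℂ)*b)) :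
    β' = (‖a - Complex.I*b‖ - ‖a + Complex.I*b‖) /
         (‖a + Complex.I*b‖ + ‖a - Complex.I*b‖) := by
  have h1 : ((c:ℂ)+(s:ℂ)*Complex.I)*(a+Complex.I*b) = ((c:ℂ)*a - (s:ℂ)*b)*(1-(β':ℂ)) := by
    linear_combination Complex.I * hrel + ((c:ℂ)*a*(β':ℂ) + (s:ℂ)*b*(1-(β':ℂ))) * Complex.I_sq
  have h2 : ((c:ℂ)-(s:ℂ)*Complex.I)*(a-Complex.I*b) = ((c:ℂ)*a - (s:ℂ)*b)*(1+(β':ℂ)) := by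
    linear_combination (-Complex.I) * hrel + (-(c:ℂ)*a*(β':ℂ) + (s:ℂ)*b*(1+(β':ℂ))) * Complex.I_sq
  have habs1 : ‖(c:ℂ)+(s:ℂ)*Complex.I‖ = 1 := by
    rw [Complex.norm_add_mul_I, hcs, Real.sqrt_one]
  have habs2 : ‖(c:ℂ)-(s:ℂ)*Complex.I‖ = 1 := by
    have h : ((c:ℂ)-(s:ℂ)*Complex.I) = ((c:ℂ)+((-s : ℝ):ℂ)*Complex.I) := by push_cast; ring
    rw [h, Complex.norm_add_mul_I]
    rw [show (-s)^2 = s^2 by ring, hcs, Real.sqrt_one]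
  set A := ‖(c:ℂ)*a - (s:ℂ)*b‖ with hA
  have e1 : ‖a + Complex.I*b‖ = A * (1 - β') := by
    calc ‖a + Complex.I*b‖
        = ‖((c:ℂ)+(s:ℂ)*Complex.I)*(a+Complex.I*b)‖ := by
          rw [norm_mul, habs1, one_mul]
      _ = A * (1 - β') := by
          rw [h1, norm_mul]
          congr 1
          rw [show (1 - (β':ℂ)) = (((1 - β' : ℝ)):ℂ) by push_cast; ring]
          rw [Complex.norm_real, Real.norm_eq_abs, _root_.abs_of_nonneg (by linarith)]
  have e2 : ‖a - Complex.I*b‖ = A * (1 + β') := by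
    calc ‖a - Complex.I*b‖
        = ‖((c:ℂ)-(s:ℂ)*Complex.I)*(a-Complex.I*b)‖ := by
          rw [norm_mul, habs2, one_mul]
      _ = A * (1 + β') := by
          rw [h2, norm_mul]
          congr 1
          rw [show (1 + (β':ℂ)) = (((1 + β' : ℝ)):ℂ) by push_cast; ring]
          rw [Complex.norm_real, Real.norm_eq_abs, _root_.abs_of_nonneg (by linarith)]
  have hA0 : A ≠ 0 := by
    intro h
    rw [h, zero_mul] at e1 e2
    have hp : a + Complex.I*b = 0 := norm_eq_zero.mp e1
    have hq : a - Complex.I*b = 0 := norm_eq_zero.mp e2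
    apply hab
    constructor
    · have h2a : (2:ℂ) * a = 0 := by linear_combination hp + hq
      simpa using h2a
    · have h2b : (2:ℂ) * (Complex.I * b) = 0 := by linear_combination hp - hq
      simpa [Complex.I_ne_zero] using h2b
  rw [e1, e2, show A*(1-β') + A*(1+β') = 2*A by ring, eq_div_iff (by simpa using hA0 : (2:ℝ)*A ≠ 0)]
  ring

open Matrix Complex

lemma key_exists (a b : ℂ) (hab : ¬(a = 0 ∧ b = 0)) :
    ∃ c s : ℝ, c^2 + s^2 = 1 ∧
      (s:ℂ)*a + (c:ℂ)*b = Complex.I *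
        (((‖a - Complex.I*b‖ - ‖a + Complex.I*b‖) /
          (‖a + Complex.I*b‖ + ‖a - Complex.I*b‖) : ℝ) : ℂ) *
        ((c:ℂ)*a - (s:ℂ)*b) := by
  classical
  set p : ℂ := a + Complex.I*b with hp
  set q : ℂ := a - Complex.I*b with hq
  set rp : ℝ := ‖p‖ with hrp
  set rq : ℝ := ‖q‖ with hrq
  have hpq : ¬(p = 0 ∧ q = 0) := by
    rintro ⟨h1, h2⟩
    apply hab
    constructor
    · have h2a : (2:ℂ) * a = 0 := by rw [hp] at h1; rw [hq] at h2; linear_combination h1 + h2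
      simpa using h2a
    · have h2b : (2:ℂ) * (Complex.I * b) = 0 := by
        rw [hp] at h1; rw [hq] at h2; linear_combination h1 - h2
      simpa [Complex.I_ne_zero] using h2b
  have hD : 0 < rp + rq := by
    rcases not_and_or.mp hpq with h | h
    · have := norm_pos_iff.mpr h
      have := norm_nonneg q
      rw [hrp]; linarith [this]
    · have := norm_pos_iff.mpr h
      have := norm_nonneg p
      rw [hrq]; linarith [this]
  set z : ℂ := if p = 0 ∨ q = 0 then 1 else q * rp / (p * rq) with hz
  have hz1 : ‖z‖ = 1 := by
    rw [hz]
    split_ifs with h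
    · simp
    · push_neg at h
      obtain ⟨hp0, hq0⟩ := h
      have hrp0 : rp ≠ 0 := norm_ne_zero_iff.mpr hp0
      have hrq0 : rq ≠ 0 := norm_ne_zero_iff.mpr hq0
      rw [norm_div, norm_mul, norm_mul, Complex.norm_real,
        Complex.norm_real, Real.norm_eq_abs, Real.norm_eq_abs]
      rw [_root_.abs_of_nonneg (by rw [hrp]; exact norm_nonneg p), _root_.abs_of_nonneg (by rw [hrq]; exact norm_nonneg q)]
      field_simp
      ring
  have hzkey : z * p * (rq:ℂ) = q * (rp:ℂ) := by
    rw [hz]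
    split_ifs with h
    · rcases h with h | h
      · rw [h]
        have : rp = 0 := by rw [hrp, h]; simp
        rw [this]
        simp
      · rw [h]
        have : rq = 0 := by rw [hrq, h]; simp
        rw [this]
        simp
    · push_neg at h
      obtain ⟨hp0, hq0⟩ := h
      have hrq0' : rq ≠ 0 := by rw [hrq]; exact norm_ne_zero_iff.mpr hq0
      have hrq0 : (rq:ℂ) ≠ 0 := Complex.ofReal_ne_zero.mpr hrq0'
      field_simp
  set w : ℂ := Complex.exp ((z.arg / 2 : ℝ) * Complex.I) with hw
  have hww : w * w = z := by
    rw [hw, ← Complex.exp_add]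
    have harg : ((z.arg / 2 : ℝ) : ℂ) * Complex.I + ((z.arg / 2 : ℝ) : ℂ) * Complex.I
        = (z.arg : ℂ) * Complex.I := by push_cast; ring
    rw [harg]
    have := Complex.norm_mul_exp_arg_mul_I z
    rw [hz1] at this
    simpa using this
  set c : ℝ := w.re with hc
  set s : ℝ := w.im with hs
  have habsw : ‖w‖ = 1 := by
    rw [hw]; exact Complex.norm_exp_ofReal_mul_I _
  have hcs : c^2 + s^2 = 1 := by
    have h := Complex.sq_norm w
    rw [habsw, Complex.normSq_apply] at h
    rw [hc, hs]
    nlinarith [h]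
  have hwcs : (c:ℂ) + (s:ℂ)*Complex.I = w := Complex.re_add_im w
  refine ⟨c, s, hcs, ?_⟩
  have hz2 : ((c:ℂ)+(s:ℂ)*Complex.I) * ((c:ℂ)+(s:ℂ)*Complex.I) * p * (rq:ℂ) = q * (rp:ℂ) := by
    rw [hwcs, hww]; exact hzkey
  have hcsC : (c:ℂ)^2 + (s:ℂ)^2 = 1 := by exact_mod_cast hcs
  have hDC : ((rp:ℂ) + (rq:ℂ)) ≠ 0 := by
    intro h
    have : ((rp + rq : ℝ) : ℂ) = 0 := by push_cast; exact h
    exact (ne_of_gt hD) (by exact_mod_cast this)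
  push_cast
  rw [show Complex.I * ((↑rq - ↑rp) / (↑rp + ↑rq)) * ((c:ℂ) * a - (s:ℂ) * b)
      = Complex.I * (↑rq - ↑rp) * ((c:ℂ) * a - (s:ℂ) * b) / (↑rp + ↑rq) by ring]
  rw [eq_div_iff hDC]
  rw [hp, hq] at hz2
  linear_combination (-Complex.I*((c:ℂ)-(s:ℂ)*Complex.I)) * hz2
    + (Complex.I*((c:ℂ)+(s:ℂ)*Complex.I)*(a+Complex.I*b)*(rq:ℂ)) * hcsC
    + ((s:ℂ)*a*(rp:ℂ) + (s:ℂ)*a*(rq:ℂ) - (s:ℂ)*b*(rp:ℂ)*Complex.I + (s:ℂ)*b*(rq:ℂ)*Complex.I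
      - (s:ℂ)^2*a*(c:ℂ)*(rq:ℂ)*Complex.I - (s:ℂ)^2*(c:ℂ)*b*(rq:ℂ)*Complex.I^2
      - (s:ℂ)^3*a*(rq:ℂ)*Complex.I^2 - (s:ℂ)^3*b*(rq:ℂ)*Complex.I^3
      + (c:ℂ)*b*(rp:ℂ) + (c:ℂ)*b*(rq:ℂ)) * Complex.I_sq

open Matrix Complex

lemma so2_entries (R : Matrix (Fin 2) (Fin 2) ℝ) (h1 : Rᵀ * R = 1) (h2 : R.det = 1) :
    R 0 1 = -(R 1 0) ∧ R 1 1 = R 0 0 ∧ (R 0 0)^2 + (R 1 0)^2 = 1 := by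
  have e00 := congrFun (congrFun h1 0) 0
  have e01 := congrFun (congrFun h1 0) 1
  simp [Matrix.mul_apply, Fin.sum_univ_two, Matrix.transpose_apply, Matrix.one_apply] at e00 e01
  rw [Matrix.det_fin_two] at h2
  refine ⟨?_, ?_, ?_⟩
  · linear_combination R 0 0 * e01 - R 1 0 * h2 - R 0 1 * e00
  · linear_combination R 1 0 * e01 + R 0 0 * h2 - R 1 1 * e00
  · linear_combination e00

-- membership characterization
lemma mem_span_iff (β : ℝ) (w : Fin 2 → ℂ) :
    w ∈ Submodule.span ℂ ({![1, Complex.I * (β : ℂ)]} : Set (Fin 2 → ℂ)) ↔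
      w 1 = Complex.I * (β : ℂ) * w 0 := by
  rw [Submodule.mem_span_singleton]
  constructor
  · rintro ⟨c, rfl⟩
    simp [mul_comm]
  · intro h
    refine ⟨w 0, ?_⟩
    funext i
    fin_cases i <;> simp [h, mul_comm]

open Matrix

/-- For every nonzero vector `v ∈ ℂ²`, there exists a unique `β ∈ [-1,1]` such that
`R·v` lies in the ℂ-linear span of `(1, iβ)` for some `R ∈ SO(2)`. -/
theorem stmt0 (v : Fin 2 → ℂ) (hv : v ≠ 0) :
    ∃! β : ℝ, β ∈ Set.Icc (-1 : ℝ) 1 ∧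
      ∃ R : Matrix (Fin 2) (Fin 2) ℝ, Rᵀ * R = 1 ∧ R.det = 1 ∧
        (R.map Complex.ofReal) *ᵥ v ∈
          Submodule.span ℂ ({![1, Complex.I * (β : ℂ)]} : Set (Fin 2 → ℂ)) := by
  classical
  set a : ℂ := v 0 with ha
  set b : ℂ := v 1 with hb
  have hab : ¬(a = 0 ∧ b = 0) := by
    rintro ⟨h1, h2⟩
    apply hv
    funext i
    fin_cases i
    · exact h1
    · exact h2
  set rp : ℝ := ‖a + Complex.I*b‖ with hrp
  set rq : ℝ := ‖a - Complex.I*b‖ with hrq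
  have hpq : ¬(a + Complex.I*b = 0 ∧ a - Complex.I*b = 0) := by
    rintro ⟨h1, h2⟩
    apply hab
    constructor
    · have h2a : (2:ℂ)*a = 0 := by linear_combination h1 + h2
      simpa using h2a
    · have h2b : (2:ℂ)*(Complex.I*b) = 0 := by linear_combination h1 - h2
      simpa [Complex.I_ne_zero] using h2b
  have hrp0 : 0 ≤ rp := hrp ▸ norm_nonneg _
  have hrq0 : 0 ≤ rq := hrq ▸ norm_nonneg _
  have hD : 0 < rp + rq := by
    rcases not_and_or.mp hpq with h | h
    · have hx : 0 < rp := hrp ▸ norm_pos_iff.mpr h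
      linarith
    · have hx : 0 < rq := hrq ▸ norm_pos_iff.mpr h
      linarith
  set β₀ : ℝ := (rq - rp) / (rp + rq) with hβ₀
  have hmem_icc : β₀ ∈ Set.Icc (-1:ℝ) 1 := by
    constructor
    · rw [hβ₀, le_div_iff₀ hD]
      linarith
    · rw [hβ₀, div_le_one hD]
      linarith
  refine ⟨β₀, ⟨hmem_icc, ?_⟩, ?_⟩
  · -- existence
    obtain ⟨c, s, hcs, hrel⟩ := key_exists a b hab
    refine ⟨!![c, -s; s, c], ?_, ?_, ?_⟩
    · have htr : (!![c, -s; s, c])ᵀ = !![c, s; -s, c] := by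
        ext i j
        fin_cases i <;> fin_cases j <;> rfl
      rw [htr]
      ext i j
      fin_cases i <;> fin_cases j <;>
          simp [Matrix.mul_apply, Fin.sum_univ_two, Matrix.one_apply]
      · linear_combination hcs
      · ring
      · ring
      · linear_combination hcs
    · rw [Matrix.det_fin_two_of]
      linear_combination hcs
    · rw [mem_span_iff]
      have h0 : ((!![c, -s; s, c].map Complex.ofReal) *ᵥ v) 0 = (c:ℂ)*a - (s:ℂ)*b := by
        simp [Matrix.mulVec, dotProduct, Fin.sum_univ_two, ← ha, ← hb]
        try ring
      have h1 : ((!![c, -s; s, c].map Complex.ofReal) *ᵥ v) 1 = (s:ℂ)*a + (c:ℂ)*b := by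
        simp [Matrix.mulVec, dotProduct, Fin.sum_univ_two, ← ha, ← hb]
        try ring
      rw [h0, h1, hrel]
  · -- uniqueness
    rintro β' ⟨⟨hβ1, hβ2⟩, R, hR1, hR2, hmemb⟩
    obtain ⟨e01, e11, ecs⟩ := so2_entries R hR1 hR2
    rw [mem_span_iff] at hmemb
    set c : ℝ := R 0 0 with hc
    set s : ℝ := R 1 0 with hs
    have h0 : ((R.map Complex.ofReal) *ᵥ v) 0 = (c:ℂ)*a - (s:ℂ)*b := by
      simp [Matrix.mulVec, dotProduct, Fin.sum_univ_two, Matrix.map_apply, ← ha, ← hb, e01]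
      try push_cast
      try ring
    have h1 : ((R.map Complex.ofReal) *ᵥ v) 1 = (s:ℂ)*a + (c:ℂ)*b := by
      simp [Matrix.mulVec, dotProduct, Fin.sum_univ_two, Matrix.map_apply, ← ha, ← hb, e11]
      try ring
      exact Or.inl rfl
    rw [h0, h1] at hmemb
    exact key_unique a b hab c s β' ecs hβ1 hβ2 hmemb
end

section
/- For every nonzero vector v ∈ ℂ², there exists a unique β ∈ [0,1] such that R·v lies in the ℂ-linear span of the vector (1, iβ) for some R ∈ O(2). -/
open Matrix

lemma inv_key (v : Fin 2 → ℂ) (β : ℝ) (hβ0 : 0 ≤ β) (hβ1 : β ≤ 1)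
    (R : Matrix (Fin 2) (Fin 2) ℝ) (hR : Rᵀ * R = 1)
    (hmem : (R.map Complex.ofReal) *ᵥ v ∈
        Submodule.span ℂ ({![1, Complex.I * (β : ℂ)]} : Set (Fin 2 → ℂ))) :
    ‖v 0 ^ 2 + v 1 ^ 2‖ * (1 + β ^ 2)
      = (Complex.normSq (v 0) + Complex.normSq (v 1)) * (1 - β ^ 2) := by
  obtain ⟨c, hc⟩ := Submodule.mem_span_singleton.mp hmem
  have h00 := congrFun (congrFun (hR : (Rᵀ * R : Matrix (Fin 2) (Fin 2) ℝ) = 1) 0) 0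
  have h01 := congrFun (congrFun (hR : (Rᵀ * R : Matrix (Fin 2) (Fin 2) ℝ) = 1) 0) 1
  have h11 := congrFun (congrFun (hR : (Rᵀ * R : Matrix (Fin 2) (Fin 2) ℝ) = 1) 1) 1
  simp [Matrix.mul_apply, Fin.sum_univ_two, Matrix.transpose_apply, Matrix.one_apply] at h00 h01 h11
  have hc0 := congrFun hc 0
  have hc1 := congrFun hc 1
  simp [Matrix.mulVec, dotProduct, Fin.sum_univ_two, Matrix.map_apply] at hc0 hc1
  have H00 := congrArg (Complex.ofReal) h00
  have H01 := congrArg (Complex.ofReal) h01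
  have H11 := congrArg (Complex.ofReal) h11
  push_cast at H00 H01 H11
  have e1 : c ^ 2 * (1 - (β : ℂ) ^ 2) = v 0 ^ 2 + v 1 ^ 2 := by
    linear_combination (c + (↑(R 0 0) * v 0 + ↑(R 0 1) * v 1)) * hc0
      + (c * (Complex.I * ↑β) + (↑(R 1 0) * v 0 + ↑(R 1 1) * v 1)) * hc1
      + (-(c ^ 2 * (β : ℂ) ^ 2)) * Complex.I_sq
      + v 0 ^ 2 * H00 + v 1 ^ 2 * H11 + 2 * v 0 * v 1 * H01
  have n0 : Complex.normSq c = Complex.normSq (↑(R 0 0) * v 0 + ↑(R 0 1) * v 1) := by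
    rw [hc0]
  have n1 : Complex.normSq c * β ^ 2 = Complex.normSq (↑(R 1 0) * v 0 + ↑(R 1 1) * v 1) := by
    rw [← hc1, Complex.normSq_mul, Complex.normSq_mul, Complex.normSq_I, Complex.normSq_ofReal]
    ring
  have e2 : Complex.normSq c * (1 + β ^ 2) = Complex.normSq (v 0) + Complex.normSq (v 1) := by
    simp only [Complex.normSq_apply, Complex.add_re, Complex.add_im, Complex.mul_re,
      Complex.mul_im, Complex.ofReal_re, Complex.ofReal_im] at n0 n1 ⊢
    linear_combination n0 + n1 + ((v 0).re ^ 2 + (v 0).im ^ 2) * h00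
      + ((v 1).re ^ 2 + (v 1).im ^ 2) * h11
      + 2 * ((v 0).re * (v 1).re + (v 0).im * (v 1).im) * h01
  have hb : (0:ℝ) ≤ 1 - β ^ 2 := by nlinarith
  calc ‖v 0 ^ 2 + v 1 ^ 2‖ * (1 + β ^ 2)
      = ‖c ^ 2 * ((1 - β ^ 2 : ℝ) : ℂ)‖ * (1 + β ^ 2) := by
        rw [← e1]; push_cast; ring_nf
    _ = ‖c‖ ^ 2 * (1 - β ^ 2) * (1 + β ^ 2) := by
        rw [norm_mul, norm_pow, Complex.norm_real, Real.norm_eq_abs, _root_.abs_of_nonneg hb]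
    _ = (Complex.normSq (v 0) + Complex.normSq (v 1)) * (1 - β ^ 2) := by
        rw [← e2, ← Complex.sq_norm]; ring

set_option maxHeartbeats 1600000 in
lemma ex_key (v : Fin 2 → ℂ) (hv : v ≠ 0) :
    ∃ β : ℝ, β ∈ Set.Icc (0 : ℝ) 1 ∧
      ∃ R : Matrix (Fin 2) (Fin 2) ℝ, Rᵀ * R = 1 ∧
        (R.map Complex.ofReal) *ᵥ v ∈
          Submodule.span ℂ ({![1, Complex.I * (β : ℂ)]} : Set (Fin 2 → ℂ)) := by
  obtain ⟨w, hw, hw2⟩ : ∃ w : ℂ, w ≠ 0 ∧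
      w ^ 2 * (v 0 ^ 2 + v 1 ^ 2) = (‖v 0 ^ 2 + v 1 ^ 2‖ : ℂ) := by
    set Q : ℂ := v 0 ^ 2 + v 1 ^ 2 with hQdef
    refine ⟨Complex.exp (-(Q.arg / 2) * Complex.I), Complex.exp_ne_zero _, ?_⟩
    have h1 : Complex.exp (-(Q.arg / 2) * Complex.I) ^ 2
        = Complex.exp (-(Q.arg) * Complex.I) := by
      rw [sq, ← Complex.exp_add]; ring_nf
    calc Complex.exp (-(Q.arg / 2) * Complex.I) ^ 2 * Q
        = Complex.exp (-(Q.arg) * Complex.I)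
            * ((‖Q‖) * Complex.exp (Q.arg * Complex.I)) := by
          rw [h1, Complex.norm_mul_exp_arg_mul_I]
      _ = (‖Q‖) * Complex.exp (-(Q.arg) * Complex.I + Q.arg * Complex.I) := by
          rw [Complex.exp_add]; ring
      _ = (‖Q‖ : ℂ) := by ring_nf; simp
  obtain ⟨a0, b0, hp0⟩ : ∃ a b : ℝ, w * v 0 = ↑a + ↑b * Complex.I :=
    ⟨_, _, (Complex.re_add_im _).symm⟩
  obtain ⟨a1, b1, hp1⟩ : ∃ a b : ℝ, w * v 1 = ↑a + ↑b * Complex.I :=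
    ⟨_, _, (Complex.re_add_im _).symm⟩
  have hp : (↑a0 + ↑b0 * Complex.I) ^ 2 + (↑a1 + ↑b1 * Complex.I) ^ 2
      = (‖v 0 ^ 2 + v 1 ^ 2‖ : ℂ) := by
    rw [← hp0, ← hp1, ← hw2]; ring
  rw [Complex.ext_iff] at hp
  obtain ⟨h1, h2⟩ := hp
  simp [Complex.add_re, Complex.add_im, Complex.mul_re, Complex.mul_im, pow_two] at h1 h2
  have h2' : a0 * b0 + a1 * b1 = 0 := by linarith
  have hQ0 : 0 ≤ ‖v 0 * v 0 + v 1 * v 1‖ := norm_nonneg _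
  have hN : 0 < a0 ^ 2 + a1 ^ 2 := by
    by_contra h
    push_neg at h
    have ha0 : a0 = 0 := by nlinarith [sq_nonneg a0, sq_nonneg a1]
    have ha1 : a1 = 0 := by nlinarith [sq_nonneg a0, sq_nonneg a1]
    have hb0 : b0 = 0 := by nlinarith [sq_nonneg b0, sq_nonneg b1]
    have hb1 : b1 = 0 := by nlinarith [sq_nonneg b0, sq_nonneg b1]
    apply hv
    funext j
    fin_cases j
    · have h : w * v 0 = 0 := by rw [hp0, ha0, hb0]; simp
      simpa [hw] using h
    · have h : w * v 1 = 0 := by rw [hp1, ha1, hb1]; simp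
      simpa [hw] using h
  obtain ⟨n, hn, hn2⟩ : ∃ n : ℝ, 0 < n ∧ n ^ 2 = a0 ^ 2 + a1 ^ 2 :=
    ⟨Real.sqrt (a0 ^ 2 + a1 ^ 2), Real.sqrt_pos.mpr hN, Real.sq_sqrt hN.le⟩
  obtain ⟨σ, hσsq, hσD⟩ : ∃ σ : ℝ, σ ^ 2 = 1 ∧
      σ * (a0 * b1 - a1 * b0) = |a0 * b1 - a1 * b0| := by
    rcases le_or_gt 0 (a0 * b1 - a1 * b0) with h | h
    · exact ⟨1, by norm_num, by rw [_root_.abs_of_nonneg h]; ring⟩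
    · exact ⟨-1, by norm_num, by rw [_root_.abs_of_neg h]; ring⟩
  have hD2 : (a0 * b1 - a1 * b0) ^ 2 = (a0 ^ 2 + a1 ^ 2) * (b0 ^ 2 + b1 ^ 2) := by
    nlinarith [h2', sq_nonneg (a0 * b0 + a1 * b1)]
  have hb_le : b0 ^ 2 + b1 ^ 2 ≤ a0 ^ 2 + a1 ^ 2 := by nlinarith [h1, hQ0]
  have hn' : n ≠ 0 := hn.ne'
  refine ⟨|a0 * b1 - a1 * b0| / (a0 ^ 2 + a1 ^ 2), ⟨by positivity, ?_⟩,
    Matrix.of ![![a0 / n, a1 / n], ![σ * (-a1) / n, σ * a0 / n]], ?_, ?_⟩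
  · rw [div_le_one hN]
    nlinarith [abs_nonneg (a0 * b1 - a1 * b0), _root_.sq_abs (a0 * b1 - a1 * b0), hD2,
      hb_le, hN]
  · ext i j
    fin_cases i <;> fin_cases j <;>
      simp [Matrix.mul_apply, Fin.sum_univ_two, Matrix.one_apply, Matrix.transpose_apply] <;>
      field_simp <;>
      first
      | linear_combination a1 ^ 2 * hσsq - hn2
      | linear_combination a0 ^ 2 * hσsq - hn2
      | linear_combination (-(a1 * a0)) * hσsq
      | linear_combination (a1 * a0) * hσsq
  · have hv0 : v 0 = (↑a0 + ↑b0 * Complex.I) / w := by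
      rw [← hp0]; field_simp
    have hv1 : v 1 = (↑a1 + ↑b1 * Complex.I) / w := by
      rw [← hp1]; field_simp
    have hveq : Matrix.map (Matrix.of ![![a0 / n, a1 / n], ![σ * (-a1) / n, σ * a0 / n]]
          : Matrix (Fin 2) (Fin 2) ℝ) Complex.ofReal *ᵥ v
        = ((n : ℂ) / w) •
          ![1, Complex.I * ((|a0 * b1 - a1 * b0| / (a0 ^ 2 + a1 ^ 2) : ℝ) : ℂ)] := by
      have hNc : ((a0:ℂ) ^ 2 + a1 ^ 2) = (n:ℂ) ^ 2 := by
        exact_mod_cast congrArg Complex.ofReal hn2.symm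
      have h2c : (a0:ℂ) * b0 + a1 * b1 = 0 := by
        exact_mod_cast congrArg Complex.ofReal h2'
      have hσDc : (σ:ℂ) * (a0 * b1 - a1 * b0) = (|a0 * b1 - a1 * b0| : ℝ) := by
        exact_mod_cast congrArg Complex.ofReal hσD
      have hnc : (n : ℂ) ≠ 0 := by exact_mod_cast hn'
      have hNc0 : ((a0:ℂ) ^ 2 + a1 ^ 2) ≠ 0 := by rw [hNc]; exact pow_ne_zero _ hnc
      funext j
      fin_cases j <;>
        simp [Matrix.mulVec, dotProduct, Fin.sum_univ_two, Matrix.map_apply,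
          hv0, hv1]
      · push_cast
        field_simp
        linear_combination Complex.I * h2c + hNc
      · push_cast
        field_simp
        linear_combination (Complex.I * ((a0:ℂ) ^ 2 + a1 ^ 2)) * hσDc
          + (Complex.I * ((|a0 * b1 - a1 * b0| : ℝ) : ℂ)) * hNc
    rw [hveq]
    exact Submodule.smul_mem _ _ (Submodule.mem_span_singleton_self _)

/-- For every nonzero vector `v ∈ ℂ²`, there exists a unique `β ∈ [0,1]` such that
`R·v` lies in the ℂ-linear span of `(1, iβ)` for some `R ∈ O(2)`. -/
theorem stmt1 (v : Fin 2 → ℂ) (hv : v ≠ 0) :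
    ∃! β : ℝ, β ∈ Set.Icc (0 : ℝ) 1 ∧
      ∃ R : Matrix (Fin 2) (Fin 2) ℝ, Rᵀ * R = 1 ∧
        (R.map Complex.ofReal) *ᵥ v ∈
          Submodule.span ℂ ({![1, Complex.I * (β : ℂ)]} : Set (Fin 2 → ℂ)) := by
  have hS : 0 < Complex.normSq (v 0) + Complex.normSq (v 1) := by
    by_contra h
    push_neg at h
    have h0 : Complex.normSq (v 0) = 0 := by
      nlinarith [Complex.normSq_nonneg (v 0), Complex.normSq_nonneg (v 1)]
    have h1 : Complex.normSq (v 1) = 0 := by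
      nlinarith [Complex.normSq_nonneg (v 0), Complex.normSq_nonneg (v 1)]
    apply hv
    funext j
    fin_cases j
    · exact Complex.normSq_eq_zero.mp h0
    · exact Complex.normSq_eq_zero.mp h1
  have huniq : ∀ β₁ β₂ : ℝ,
      (β₁ ∈ Set.Icc (0:ℝ) 1 ∧ ∃ R : Matrix (Fin 2) (Fin 2) ℝ, Rᵀ * R = 1 ∧
        (R.map Complex.ofReal) *ᵥ v ∈
          Submodule.span ℂ ({![1, Complex.I * (β₁ : ℂ)]} : Set (Fin 2 → ℂ))) →
      (β₂ ∈ Set.Icc (0:ℝ) 1 ∧ ∃ R : Matrix (Fin 2) (Fin 2) ℝ, Rᵀ * R = 1 ∧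
        (R.map Complex.ofReal) *ᵥ v ∈
          Submodule.span ℂ ({![1, Complex.I * (β₂ : ℂ)]} : Set (Fin 2 → ℂ))) →
      β₁ = β₂ := by
    rintro β₁ β₂ ⟨hβ₁, R₁, hR₁, hm₁⟩ ⟨hβ₂, R₂, hR₂, hm₂⟩
    have E1 := inv_key v β₁ hβ₁.1 hβ₁.2 R₁ hR₁ hm₁
    have E2 := inv_key v β₂ hβ₂.1 hβ₂.2 R₂ hR₂ hm₂
    have hA : 0 ≤ ‖v 0 ^ 2 + v 1 ^ 2‖ := norm_nonneg _
    have hsq : β₁ ^ 2 = β₂ ^ 2 := by nlinarith [E1, E2, hS, hA]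
    nlinarith [hsq, hβ₁.1, hβ₂.1, sq_nonneg (β₁ - β₂), sq_nonneg (β₁ + β₂)]
  have hex := ex_key v hv
  obtain ⟨β, hβ⟩ := hex
  exact ⟨β, hβ, fun y hy => huniq y β hy hβ⟩
end

section
/- For every nonzero vector v ∈ ℂ³ there exist λ ∈ ℂ, R ∈ SO(3) and β ∈ [0,1] such that λ·(R·v) = (1, iβ, 0). Similarly, for every nonzero vector v ∈ ℂ² there exist λ ∈ ℂ, R ∈ SO(2) and β ∈ [-1,1] such that λ·(R·v) = (1, iβ). -/
open Matrix

section Aux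

lemma dp_self_nonneg {n : ℕ} (b : Fin n → ℝ) : 0 ≤ b ⬝ᵥ b :=
  Finset.sum_nonneg fun _ _ => mul_self_nonneg _

lemma key {n : ℕ} (v : Fin n → ℂ) (hv : v ≠ 0) :
    ∃ (μ : ℂ) (a b : Fin n → ℝ), μ ≠ 0 ∧
      (∀ i, μ * v i = (a i : ℂ) + (b i : ℂ) * Complex.I) ∧
      a ⬝ᵥ b = 0 ∧ b ⬝ᵥ b ≤ a ⬝ᵥ a ∧ a ≠ 0 := by
  set z : ℂ := ∑ i, (v i) ^ 2 with hz
  obtain ⟨μ, hμ0, hμz⟩ : ∃ μ : ℂ, μ ≠ 0 ∧ μ ^ 2 * z = (‖z‖ : ℂ) := by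
    refine ⟨Complex.exp (-(z.arg / 2) * Complex.I), Complex.exp_ne_zero _, ?_⟩
    have h2 : Complex.exp (-(z.arg / 2) * Complex.I) ^ 2
        = Complex.exp (-(z.arg * Complex.I)) := by
      rw [sq, ← Complex.exp_add]; ring_nf
    rw [h2, Complex.exp_neg, inv_mul_eq_iff_eq_mul₀ (Complex.exp_ne_zero _)]
    exact ((Complex.norm_mul_exp_arg_mul_I z).symm.trans (mul_comm _ _))
  set a : Fin n → ℝ := fun i => (μ * v i).re with ha
  set b : Fin n → ℝ := fun i => (μ * v i).im with hb
  have hre : ∀ i, μ * v i = (a i : ℂ) + (b i : ℂ) * Complex.I := fun i =>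
    (Complex.re_add_im _).symm
  have hsum : ∑ i, (μ * v i) ^ 2 = (‖z‖ : ℂ) := by
    rw [← hμz, hz, Finset.mul_sum]
    congr 1; ext i; ring
  have him : ∑ i, (a i * b i + b i * a i) = 0 := by
    have h := congrArg Complex.im hsum
    simpa [Complex.im_sum, pow_two, Complex.mul_im, ha, hb] using h
  have hre' : ∑ i, (a i * a i - b i * b i) = ‖z‖ := by
    have h := congrArg Complex.re hsum
    simpa [Complex.re_sum, pow_two, Complex.mul_re, ha, hb] using h
  have hab : a ⬝ᵥ b = 0 := by
    have : (2 : ℝ) * (a ⬝ᵥ b) = 0 := by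
      rw [dotProduct, Finset.mul_sum, ← him]; congr 1; ext i; ring
    linarith
  have hba : b ⬝ᵥ b ≤ a ⬝ᵥ a := by
    have h1 : a ⬝ᵥ a - b ⬝ᵥ b = ‖z‖ := by
      rw [dotProduct, dotProduct, ← Finset.sum_sub_distrib, ← hre']
    have h2 : (0:ℝ) ≤ ‖z‖ := norm_nonneg z
    linarith
  have hw : ∃ i, μ * v i ≠ 0 := by
    by_contra h
    push_neg at h
    apply hv
    funext i
    rcases mul_eq_zero.mp (h i) with h' | h'
    · exact absurd h' hμ0
    · simpa using h'
  have hane : a ≠ 0 := by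
    intro h0
    have haa : a ⬝ᵥ a = 0 := by rw [h0]; simp
    have hbb0 : b ⬝ᵥ b = 0 := le_antisymm (by linarith) (dp_self_nonneg b)
    have hb0 : b = 0 := dotProduct_self_eq_zero.mp hbb0
    obtain ⟨i, hi⟩ := hw
    apply hi
    rw [hre i, congrFun h0 i, congrFun hb0 i]
    simp
  exact ⟨μ, a, b, hμ0, hre, hab, hba, hane⟩

lemma map_mulVec_split {n : ℕ} (R : Matrix (Fin n) (Fin n) ℝ) (a b : Fin n → ℝ) :
    (R.map Complex.ofReal) *ᵥ (fun i => (a i : ℂ) + (b i : ℂ) * Complex.I)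
      = fun j => (((R *ᵥ a) j : ℝ) : ℂ) + (((R *ᵥ b) j : ℝ) : ℂ) * Complex.I := by
  funext j
  simp only [Matrix.mulVec, dotProduct, Matrix.map_apply]
  calc ∑ k, (R j k : ℂ) * ((a k : ℂ) + (b k : ℂ) * Complex.I)
      = ∑ k, (((R j k * a k : ℝ) : ℂ) + ((R j k * b k : ℝ) : ℂ) * Complex.I) := by
        refine Finset.sum_congr rfl fun k _ => ?_
        push_cast
        ring
    _ = (∑ k, ((R j k * a k : ℝ) : ℂ)) + (∑ k, ((R j k * b k : ℝ) : ℂ)) * Complex.I := by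
        rw [Finset.sum_add_distrib, Finset.sum_mul]
    _ = _ := by
        push_cast
        ring

lemma rot2 (a b : Fin 2 → ℝ) (hab : a ⬝ᵥ b = 0) (ha : a ≠ 0) :
    ∃ (R : Matrix (Fin 2) (Fin 2) ℝ) (s : ℝ),
      Rᵀ * R = 1 ∧ R.det = 1 ∧
      R *ᵥ a = ![Real.sqrt (a ⬝ᵥ a), 0] ∧ R *ᵥ b = ![0, s] ∧ s ^ 2 = b ⬝ᵥ b := by
  have hA : 0 < a ⬝ᵥ a :=
    lt_of_le_of_ne (dp_self_nonneg a) (fun h => ha (dotProduct_self_eq_zero.mp h.symm))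
  set t := Real.sqrt (a ⬝ᵥ a) with ht
  have ht0 : 0 < t := Real.sqrt_pos.mpr hA
  have ht2 : t ^ 2 = a ⬝ᵥ a := Real.sq_sqrt hA.le
  have haa : a 0 * a 0 + a 1 * a 1 = t ^ 2 := by
    rw [ht2, dotProduct, Fin.sum_univ_two]
  have hab' : a 0 * b 0 + a 1 * b 1 = 0 := by
    rw [← hab, dotProduct, Fin.sum_univ_two]
  refine ⟨!![a 0 / t, a 1 / t; -(a 1) / t, a 0 / t], (a 0 * b 1 - a 1 * b 0) / t,
    ?_, ?_, ?_, ?_, ?_⟩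
  · ext i j
    fin_cases i <;> fin_cases j <;>
      simp only [Matrix.transpose_apply, Matrix.mul_apply, Fin.sum_univ_two] <;>
      simp [Matrix.one_apply] <;> field_simp <;> nlinarith [haa]
  · rw [Matrix.det_fin_two_of]
    field_simp
    nlinarith [haa]
  · funext i
    fin_cases i <;>
      simp [Matrix.mulVec, dotProduct, Fin.sum_univ_two] <;> field_simp <;> nlinarith [haa]
  · funext i
    fin_cases i <;>
      simp [Matrix.mulVec, dotProduct, Fin.sum_univ_two] <;> field_simp <;> nlinarith [hab']
  · have hbb : b ⬝ᵥ b = b 0 * b 0 + b 1 * b 1 := by rw [dotProduct, Fin.sum_univ_two]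
    rw [hbb, div_pow, ht2, div_eq_iff (ne_of_gt hA)]
    nlinarith [haa, hab']

lemma rot3_core (e f : Fin 3 → ℝ)
    (he' : e 0 * e 0 + e 1 * e 1 + e 2 * e 2 = 1)
    (hf' : f 0 * f 0 + f 1 * f 1 + f 2 * f 2 = 1)
    (hef' : e 0 * f 0 + e 1 * f 1 + e 2 * f 2 = 0) :
    ∃ R : Matrix (Fin 3) (Fin 3) ℝ, Rᵀ * R = 1 ∧ R.det = 1 ∧
      ∀ x : Fin 3 → ℝ, R *ᵥ x =
        ![e 0 * x 0 + e 1 * x 1 + e 2 * x 2,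
          f 0 * x 0 + f 1 * x 1 + f 2 * x 2,
          (e 1 * f 2 - e 2 * f 1) * x 0 + (e 2 * f 0 - e 0 * f 2) * x 1
            + (e 0 * f 1 - e 1 * f 0) * x 2] := by
  refine ⟨!![e 0, e 1, e 2; f 0, f 1, f 2;
      e 1 * f 2 - e 2 * f 1, e 2 * f 0 - e 0 * f 2, e 0 * f 1 - e 1 * f 0], ?_, ?_, ?_⟩
  · rw [mul_eq_one_comm]
    ext i j
    fin_cases i <;> fin_cases j <;>
      simp only [Matrix.transpose_apply, Matrix.mul_apply, Fin.sum_univ_three] <;>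
      simp [Matrix.one_apply] <;>
      first
        | ring1
        | linear_combination he'
        | linear_combination hf'
        | linear_combination hef'
        | linear_combination (f 0 * f 0 + f 1 * f 1 + f 2 * f 2) * he' + hf'
            - (e 0 * f 0 + e 1 * f 1 + e 2 * f 2) * hef'
  · rw [Matrix.det_fin_three]
    simp
    linear_combination (f 0 * f 0 + f 1 * f 1 + f 2 * f 2) * he' + hf'
      - (e 0 * f 0 + e 1 * f 1 + e 2 * f 2) * hef'
  · intro x
    funext i
    fin_cases i <;> simp [Matrix.mulVec, dotProduct, Fin.sum_univ_three]

lemma rot3 (a b : Fin 3 → ℝ) (hab : a ⬝ᵥ b = 0) (ha : a ≠ 0) :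
    ∃ R : Matrix (Fin 3) (Fin 3) ℝ, Rᵀ * R = 1 ∧ R.det = 1 ∧
      R *ᵥ a = ![Real.sqrt (a ⬝ᵥ a), 0, 0] ∧
      R *ᵥ b = ![0, Real.sqrt (b ⬝ᵥ b), 0] := by
  have hA : 0 < a ⬝ᵥ a :=
    lt_of_le_of_ne (dp_self_nonneg a) (fun h => ha (dotProduct_self_eq_zero.mp h.symm))
  set t := Real.sqrt (a ⬝ᵥ a) with htdef
  have ht0 : 0 < t := Real.sqrt_pos.mpr hA
  have ht2 : t * t = a 0 * a 0 + a 1 * a 1 + a 2 * a 2 := by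
    rw [htdef, Real.mul_self_sqrt hA.le, dotProduct, Fin.sum_univ_three]
  set e : Fin 3 → ℝ := fun i => a i / t with hedef
  have he' : e 0 * e 0 + e 1 * e 1 + e 2 * e 2 = 1 := by
    simp only [hedef]
    field_simp
    linarith [ht2]
  have hae : ∀ i, a i = t * e i := by
    intro i; simp only [hedef]; field_simp
  set s := Real.sqrt (b ⬝ᵥ b) with hsdef
  have hs2 : s * s = b 0 * b 0 + b 1 * b 1 + b 2 * b 2 := by
    rw [hsdef, Real.mul_self_sqrt (dp_self_nonneg b), dotProduct, Fin.sum_univ_three]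
  have hab3 : a 0 * b 0 + a 1 * b 1 + a 2 * b 2 = 0 := by
    rw [← hab, dotProduct, Fin.sum_univ_three]
  obtain ⟨f, hf', hef', hbf⟩ :
      ∃ f : Fin 3 → ℝ, (f 0 * f 0 + f 1 * f 1 + f 2 * f 2 = 1) ∧
        (e 0 * f 0 + e 1 * f 1 + e 2 * f 2 = 0) ∧ (∀ i, b i = s * f i) := by
    by_cases hb : b = 0
    · have hs0 : s = 0 := by rw [hsdef, hb]; simp
      by_cases h12 : e 1 = 0 ∧ e 2 = 0
      · refine ⟨![0, 1, 0], by norm_num [Matrix.cons_val_two, Matrix.tail_cons, Matrix.head_cons], by simp [h12.1], fun i => by rw [hb, hs0]; simp⟩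
      · set u : ℝ := Real.sqrt (e 1 * e 1 + e 2 * e 2) with hudef
        have hu2pos : 0 < e 1 * e 1 + e 2 * e 2 := by
          rcases (not_and_or.mp h12) with h | h
          · nlinarith [mul_self_pos.mpr h, mul_self_nonneg (e 2)]
          · nlinarith [mul_self_pos.mpr h, mul_self_nonneg (e 1)]
        have hu0 : 0 < u := Real.sqrt_pos.mpr hu2pos
        have hu2 : u * u = e 1 * e 1 + e 2 * e 2 := Real.mul_self_sqrt hu2pos.le
        refine ⟨![0, e 2 / u, -(e 1) / u], ?_, ?_, fun i => by rw [hb, hs0]; simp⟩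
        · simp only [Matrix.cons_val_zero, Matrix.cons_val_one, Matrix.head_cons,
            Matrix.cons_val_two, Matrix.tail_cons]
          field_simp
          linarith [hu2]
        · simp only [Matrix.cons_val_zero, Matrix.cons_val_one, Matrix.head_cons,
            Matrix.cons_val_two, Matrix.tail_cons]
          field_simp
          ring
    · have hB : 0 < b ⬝ᵥ b :=
        lt_of_le_of_ne (dp_self_nonneg b) (fun h => hb (dotProduct_self_eq_zero.mp h.symm))
      have hs0 : 0 < s := Real.sqrt_pos.mpr hB
      refine ⟨fun i => b i / s, ?_, ?_, fun i => by field_simp⟩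
      · field_simp
        linarith [hs2]
      · simp only [hedef]
        field_simp
        linarith [hab3]
  obtain ⟨R, h1, h2, hRx⟩ := rot3_core e f he' hf' hef'
  refine ⟨R, h1, h2, ?_, ?_⟩
  · rw [hRx a]
    funext i
    fin_cases i <;> simp <;> rw [hae 0, hae 1, hae 2] <;>
      first
        | linear_combination t * he'
        | linear_combination t * hef'
        | ring1
  · rw [hRx b]
    funext i
    fin_cases i <;> simp <;> rw [hbf 0, hbf 1, hbf 2] <;>
      first
        | linear_combination s * hef'
        | linear_combination s * hf'
        | ring1

end Aux

/-- For every nonzero `v ∈ ℂ³` there exist `λ ∈ ℂ`, `R ∈ SO(3)` and `β ∈ [0,1]` with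
`λ·(R·v) = (1, iβ, 0)`; and for every nonzero `v ∈ ℂ²` there exist `λ ∈ ℂ`, `R ∈ SO(2)`
and `β ∈ [-1,1]` with `λ·(R·v) = (1, iβ)`. -/
theorem stmt2 :
    (∀ v : Fin 3 → ℂ, v ≠ 0 →
      ∃ (l : ℂ) (R : Matrix (Fin 3) (Fin 3) ℝ) (β : ℝ),
        Rᵀ * R = 1 ∧ R.det = 1 ∧ β ∈ Set.Icc (0 : ℝ) 1 ∧
        l • ((R.map Complex.ofReal) *ᵥ v) = ![1, Complex.I * (β : ℂ), 0]) ∧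
    (∀ v : Fin 2 → ℂ, v ≠ 0 →
      ∃ (l : ℂ) (R : Matrix (Fin 2) (Fin 2) ℝ) (β : ℝ),
        Rᵀ * R = 1 ∧ R.det = 1 ∧ β ∈ Set.Icc (-1 : ℝ) 1 ∧
        l • ((R.map Complex.ofReal) *ᵥ v) = ![1, Complex.I * (β : ℂ)]) := by
  constructor
  · intro v hv
    obtain ⟨μ, a, b, hμ0, hre, hab, hba, hane⟩ := key v hv
    obtain ⟨R, h1, h2, hRa, hRb⟩ := rot3 a b hab hane
    have hA : 0 < a ⬝ᵥ a :=
      lt_of_le_of_ne (dp_self_nonneg a) (fun h => hane (dotProduct_self_eq_zero.mp h.symm))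
    set t := Real.sqrt (a ⬝ᵥ a) with htdef
    set s := Real.sqrt (b ⬝ᵥ b) with hsdef
    have ht0 : 0 < t := Real.sqrt_pos.mpr hA
    have hs0 : 0 ≤ s := Real.sqrt_nonneg _
    have hst : s ≤ t := Real.sqrt_le_sqrt hba
    have hμv : μ • v = fun i => (a i : ℂ) + (b i : ℂ) * Complex.I := by
      funext i; rw [Pi.smul_apply, smul_eq_mul, hre i]
    have hμX : μ • ((R.map Complex.ofReal) *ᵥ v)
        = fun j => (((![t, 0, 0] : Fin 3 → ℝ) j : ℝ) : ℂ)
            + (((![0, s, 0] : Fin 3 → ℝ) j : ℝ) : ℂ) * Complex.I := by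
      rw [← Matrix.mulVec_smul, hμv, map_mulVec_split, hRa, hRb]
    refine ⟨(t : ℂ)⁻¹ * μ, R, s / t, h1, h2,
      ⟨div_nonneg hs0 ht0.le, (div_le_one ht0).mpr hst⟩, ?_⟩
    funext j
    have hj : μ * ((R.map Complex.ofReal) *ᵥ v) j
        = (((![t, 0, 0] : Fin 3 → ℝ) j : ℝ) : ℂ)
            + (((![0, s, 0] : Fin 3 → ℝ) j : ℝ) : ℂ) * Complex.I := by
      have := congrFun hμX j
      simpa using this
    have htc : (t : ℂ) ≠ 0 := Complex.ofReal_ne_zero.mpr ht0.ne'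
    fin_cases j <;>
      simp only [Pi.smul_apply, smul_eq_mul, mul_assoc] <;>
      rw [hj] <;> simp <;> field_simp <;> push_cast <;> ring
  · intro v hv
    obtain ⟨μ, a, b, hμ0, hre, hab, hba, hane⟩ := key v hv
    obtain ⟨R, s, h1, h2, hRa, hRb⟩ := rot2 a b hab hane
    have hA : 0 < a ⬝ᵥ a :=
      lt_of_le_of_ne (dp_self_nonneg a) (fun h => hane (dotProduct_self_eq_zero.mp h.symm))
    set t := Real.sqrt (a ⬝ᵥ a) with htdef
    have ht0 : 0 < t := Real.sqrt_pos.mpr hA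
    have ht2 : t ^ 2 = a ⬝ᵥ a := Real.sq_sqrt hA.le
    have hs2 : s ^ 2 ≤ t ^ 2 := by rw [ht2]; exact hRb.2 ▸ hba
    have hst : -t ≤ s ∧ s ≤ t := by constructor <;> nlinarith
    have hμv : μ • v = fun i => (a i : ℂ) + (b i : ℂ) * Complex.I := by
      funext i; rw [Pi.smul_apply, smul_eq_mul, hre i]
    have hμX : μ • ((R.map Complex.ofReal) *ᵥ v)
        = fun j => (((![t, 0] : Fin 2 → ℝ) j : ℝ) : ℂ)
            + (((![0, s] : Fin 2 → ℝ) j : ℝ) : ℂ) * Complex.I := by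
      rw [← Matrix.mulVec_smul, hμv, map_mulVec_split, hRa, hRb.1]
    refine ⟨(t : ℂ)⁻¹ * μ, R, s / t, h1, h2,
      ⟨(le_div_iff₀ ht0).mpr (by linarith [hst.1]), (div_le_one ht0).mpr hst.2⟩, ?_⟩
    · funext j
      have hj : μ * ((R.map Complex.ofReal) *ᵥ v) j
          = (((![t, 0] : Fin 2 → ℝ) j : ℝ) : ℂ)
              + (((![0, s] : Fin 2 → ℝ) j : ℝ) : ℂ) * Complex.I := by
        have := congrFun hμX j
        simpa using this
      have htc : (t : ℂ) ≠ 0 := Complex.ofReal_ne_zero.mpr ht0.ne'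
      fin_cases j <;>
        simp only [Pi.smul_apply, smul_eq_mul, mul_assoc] <;>
        rw [hj] <;> simp <;> field_simp <;> push_cast <;> ring
end

section
/- Let β, β′ ∈ [0,1], λ ∈ ℂ and R ∈ SO(3). Then λ·(R·(1, iβ, 0)) = (1, iβ′, 0) holds if and only if β = β′ and one of the following is true: (a) β = 1 and there exist x, y ∈ ℝ with x² + y² = 1 such that λ = x + iy and R is the 3×3 matrix with rows (x, -y, 0), (y, x, 0), (0, 0, 1); (b) 0 < β < 1 and there exists ε ∈ {1, -1} such that λ = ε and R = diag(ε, ε, 1); (c) β = 0 and there exist ε ∈ {1, -1} and Q ∈ O(2) with det Q = ε such that λ = ε and R is the block-diagonal matrix with 1×1 block ε and lower-right 2×2 block Q. -/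
/-!
Write `l = a + i b`. Taking real and imaginary parts, the equation says that the real orthogonal
matrix `R` maps `(a, -bβ, 0)` to `e₀` and `(b, aβ, 0)` to `β′ e₁`. Since `R` preserves dot
products, this gives `a² + b²β² = 1`, `b² + a²β² = β′²` and `ab(1 - β²) = 0`, which for
`β, β′ ∈ [0,1]` force `β′ = β`, `a² + b² = 1`, and `b = 0` unless `β = 1`. Since `Rᵀ = R⁻¹`, the two
preimages are the first two rows of `R` (the second one scaled by `β`). When `β > 0` this fixes
those rows, and orthogonality together with `det R = 1` fixes the last one. When `β = 0` only the
first row `(a, 0, 0)` is fixed, and the remaining `2 × 2` block is any orthogonal matrix of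
determinant `a`.
-/

open Matrix

namespace Matrix

section Orthogonal

variable {m n α : Type*} [Fintype m] [Fintype n] [DecidableEq n] [CommRing α] {A : Matrix m n α}

theorem dotProduct_mulVec_mulVec_of_transpose_mul_self_eq_one (hA : Aᵀ * A = 1) (x y : n → α) :
    (A *ᵥ x) ⬝ᵥ (A *ᵥ y) = x ⬝ᵥ y := by
  rw [dotProduct_mulVec, ← vecMul_transpose, vecMul_vecMul, hA, vecMul_one]

theorem eq_smul_row_of_mulVec_eq_single [DecidableEq m] (hA : Aᵀ * A = 1) {x : n → α} {i : m}
    {c : α} (h : A *ᵥ x = Pi.single i c) : x = c • A i := by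
  calc x = (Aᵀ * A) *ᵥ x := by rw [hA, one_mulVec]
    _ = Aᵀ *ᵥ Pi.single i c := by rw [← mulVec_mulVec, h]
    _ = c • A i := by ext; simp [mulVec_single, mul_comm]

end Orthogonal

theorem map_ofReal_mulVec_eq_iff {m n : Type*} [Fintype n] (R : Matrix m n ℝ) (u : n → ℂ)
    (w : m → ℂ) :
    R.map Complex.ofReal *ᵥ u = w ↔
      R *ᵥ (fun j => (u j).re) = (fun i => (w i).re) ∧
        R *ᵥ (fun j => (u j).im) = fun i => (w i).im := by
  simp only [funext_iff, Complex.ext_iff, forall_and, mulVec, dotProduct, map_apply,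
    Complex.re_sum, Complex.im_sum, Complex.re_ofReal_mul, Complex.im_ofReal_mul]

end Matrix

theorem smul_map_ofReal_mulVec_eq_iff (l : ℂ) (R : Matrix (Fin 3) (Fin 3) ℝ) (β β' : ℝ) :
    l • ((R.map Complex.ofReal) *ᵥ ![1, Complex.I * (β : ℂ), 0]) =
        ![1, Complex.I * (β' : ℂ), 0] ↔
      R *ᵥ ![l.re, -(l.im * β), 0] = Pi.single 0 1 ∧
        R *ᵥ ![l.im, l.re * β, 0] = Pi.single 1 β' := by
  have hv : (fun j => ((l • ![1, Complex.I * (β : ℂ), 0]) j).re) = ![l.re, -(l.im * β), 0] ∧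
      (fun j => ((l • ![1, Complex.I * (β : ℂ), 0]) j).im) = ![l.im, l.re * β, 0] := by
    constructor <;> ext j <;> fin_cases j <;> simp
  have hw : (fun i => (![1, Complex.I * (β' : ℂ), 0] i).re) = Pi.single 0 1 ∧
      (fun i => (![1, Complex.I * (β' : ℂ), 0] i).im) = Pi.single 1 β' := by
    constructor <;> ext i <;> fin_cases i <;> simp
  rw [← mulVec_smul, map_ofReal_mulVec_eq_iff, hv.1, hv.2, hw.1, hw.2]

theorem gram_relations_of_mulVec_eq {R : Matrix (Fin 3) (Fin 3) ℝ} (hR : Rᵀ * R = 1)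
    {a b β β' : ℝ} (h0 : R *ᵥ ![a, -(b * β), 0] = Pi.single 0 1)
    (h1 : R *ᵥ ![b, a * β, 0] = Pi.single 1 β') :
    a ^ 2 + b ^ 2 * β ^ 2 = 1 ∧ b ^ 2 + a ^ 2 * β ^ 2 = β' ^ 2 ∧ a * b * (1 - β ^ 2) = 0 := by
  have hdot := dotProduct_mulVec_mulVec_of_transpose_mul_self_eq_one hR
  have g00 := hdot ![a, -(b * β), 0] ![a, -(b * β), 0]
  have g11 := hdot ![b, a * β, 0] ![b, a * β, 0]
  have g01 := hdot ![a, -(b * β), 0] ![b, a * β, 0]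
  simp only [h0, h1, single_dotProduct, vec3_dotProduct', Pi.single_eq_same,
    Pi.single_eq_of_ne zero_ne_one] at g00 g11 g01
  exact ⟨by linear_combination -g00, by linear_combination -g11, by linear_combination -g01⟩

theorem gram_relations_solution {a b β β' : ℝ} (hβ : β ∈ Set.Icc (0 : ℝ) 1)
    (hβ' : β' ∈ Set.Icc (0 : ℝ) 1) (h0 : a ^ 2 + b ^ 2 * β ^ 2 = 1)
    (h1 : b ^ 2 + a ^ 2 * β ^ 2 = β' ^ 2) (h01 : a * b * (1 - β ^ 2) = 0) :
    β' = β ∧ a ^ 2 + b ^ 2 = 1 ∧ (β = 1 ∨ b = 0) := by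
  obtain ⟨hβ0, hβ1⟩ := hβ
  obtain ⟨hβ'0, hβ'1⟩ := hβ'
  rcases hβ1.eq_or_lt with rfl | hlt
  · exact ⟨by nlinarith, by linear_combination h0, Or.inl rfl⟩
  have hb : b = 0 := by
    have hab : a * b = 0 := by
      have : 1 - β ^ 2 ≠ 0 := by nlinarith
      simpa [this] using h01
    rcases mul_eq_zero.mp hab with rfl | hb
    · -- `a = 0` would give `b²β² = 1` with `b² = β′² ≤ 1` and `β² < 1`
      have hb2 : b ^ 2 ≤ 1 := by nlinarith
      nlinarith [mul_le_mul_of_nonneg_right hb2 (sq_nonneg β)]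
    · exact hb
  subst hb
  have hsq : β' ^ 2 = β ^ 2 := by linear_combination -h1 + β ^ 2 * h0
  exact ⟨(pow_left_inj₀ hβ'0 hβ0 two_ne_zero).mp hsq, by linear_combination h0, Or.inr rfl⟩

theorem eq_rotation_of_rows {R : Matrix (Fin 3) (Fin 3) ℝ} {a b : ℝ} (hR : Rᵀ * R = 1)
    (hdet : R.det = 1) (hab : a ^ 2 + b ^ 2 = 1) (h0 : R 0 = ![a, -b, 0]) (h1 : R 1 = ![b, a, 0]) :
    R = !![a, -b, 0; b, a, 0; 0, 0, 1] := by
  have hRRt : R * Rᵀ = 1 := mul_eq_one_comm.mp hR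
  have o20 := congrFun (congrFun hRRt 2) 0
  have o21 := congrFun (congrFun hRRt 2) 1
  simp only [mul_apply, transpose_apply, Fin.sum_univ_three, h0, h1, cons_val_zero, cons_val_one,
    cons_val, one_apply_ne, Fin.reduceEq, ne_eq, not_false_eq_true] at o20 o21
  have e20 : R 2 0 = 0 := by linear_combination a * o20 + b * o21 - R 2 0 * hab
  have e21 : R 2 1 = 0 := by linear_combination -b * o20 + a * o21 - R 2 1 * hab
  rw [det_fin_three] at hdet
  simp only [h0, h1, cons_val_zero, cons_val_one, cons_val] at hdet
  have e22 : R 2 2 = 1 := by linear_combination hdet - R 2 2 * hab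
  ext i j
  fin_cases i <;> fin_cases j <;> simp [h0, h1, e20, e21, e22]

theorem eq_rotation_of_mulVec_eq {R : Matrix (Fin 3) (Fin 3) ℝ} {a b β : ℝ} (hR : Rᵀ * R = 1)
    (hdet : R.det = 1) (hβ : β ≠ 0) (hab : a ^ 2 + b ^ 2 = 1) (hβb : β = 1 ∨ b = 0)
    (h0 : R *ᵥ ![a, -(b * β), 0] = Pi.single 0 1) (h1 : R *ᵥ ![b, a * β, 0] = Pi.single 1 β) :
    R = !![a, -b, 0; b, a, 0; 0, 0, 1] := by
  have hbβ : b * β = b := by rcases hβb with rfl | rfl <;> simp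
  rw [hbβ] at h0
  refine eq_rotation_of_rows hR hdet hab
    (by simpa using (eq_smul_row_of_mulVec_eq_single hR h0).symm) ?_
  apply smul_right_injective _ hβ
  dsimp only
  rw [← eq_smul_row_of_mulVec_eq_single hR h1]
  ext j
  fin_cases j <;> simp [mul_comm β, hbβ]

theorem exists_orthogonal_block_of_row_zero_eq {R : Matrix (Fin 3) (Fin 3) ℝ} {ε : ℝ}
    (hR : Rᵀ * R = 1) (hdet : R.det = 1) (hε : ε ^ 2 = 1) (h0 : R 0 = ![ε, 0, 0]) :
    ∃ Q : Matrix (Fin 2) (Fin 2) ℝ, Qᵀ * Q = 1 ∧ Q.det = ε ∧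
      R = !![ε, 0, 0; 0, Q 0 0, Q 0 1; 0, Q 1 0, Q 1 1] := by
  have c00 := congrFun (congrFun hR 0) 0
  simp only [mul_apply, transpose_apply, Fin.sum_univ_three, h0, cons_val_zero, one_apply_eq] at c00
  have e10 : R 1 0 = 0 := by nlinarith
  have e20 : R 2 0 = 0 := by nlinarith
  refine ⟨!![R 1 1, R 1 2; R 2 1, R 2 2], ?_, ?_, ?_⟩
  · ext i j
    have := congrFun (congrFun hR i.succ) j.succ
    fin_cases i <;> fin_cases j <;>
      simpa [mul_apply, Fin.sum_univ_three, Fin.sum_univ_two, h0, e10, e20] using this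
  · rw [det_fin_three] at hdet
    rw [det_fin_two_of]
    simp only [h0, cons_val_zero, cons_val_one, cons_val] at hdet
    linear_combination ε * hdet - (R 1 1 * R 2 2 - R 1 2 * R 2 1) * hε
  · ext i j
    fin_cases i <;> fin_cases j <;> simp [h0, e10, e20]

/-- Characterization of when `λ·(R·(1, iβ, 0)) = (1, iβ′, 0)` for `R ∈ SO(3)`,
`β, β′ ∈ [0,1]` and `λ ∈ ℂ`. -/
theorem stmt3 (β β' : ℝ) (hβ : β ∈ Set.Icc (0 : ℝ) 1) (hβ' : β' ∈ Set.Icc (0 : ℝ) 1)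
    (l : ℂ) (R : Matrix (Fin 3) (Fin 3) ℝ) (hR : Rᵀ * R = 1) (hdet : R.det = 1) :
    l • ((R.map Complex.ofReal) *ᵥ ![1, Complex.I * (β : ℂ), 0]) =
        ![1, Complex.I * (β' : ℂ), 0] ↔
      β = β' ∧
      ((β = 1 ∧ ∃ x y : ℝ, x ^ 2 + y ^ 2 = 1 ∧ l = (x : ℂ) + Complex.I * (y : ℂ) ∧
          R = !![x, -y, 0; y, x, 0; 0, 0, 1]) ∨
       (0 < β ∧ β < 1 ∧ ∃ ε : ℝ, (ε = 1 ∨ ε = -1) ∧ l = (ε : ℂ) ∧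
          R = !![ε, 0, 0; 0, ε, 0; 0, 0, 1]) ∨
       (β = 0 ∧ ∃ ε : ℝ, (ε = 1 ∨ ε = -1) ∧ ∃ Q : Matrix (Fin 2) (Fin 2) ℝ,
          Qᵀ * Q = 1 ∧ Q.det = ε ∧ l = (ε : ℂ) ∧
          R = !![ε, 0, 0; 0, Q 0 0, Q 0 1; 0, Q 1 0, Q 1 1])) := by
  rw [smul_map_ofReal_mulVec_eq_iff]
  constructor
  · rintro ⟨h0, h1⟩
    obtain ⟨g0, g1, g01⟩ := gram_relations_of_mulVec_eq hR h0 h1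
    obtain ⟨hβ'β, hab, hβb⟩ := gram_relations_solution hβ hβ' g0 g1 g01
    subst β'
    have hre : l.im = 0 → l.re ^ 2 = 1 := fun hb => by simpa [hb] using hab
    refine ⟨rfl, ?_⟩
    rcases hβ.1.eq_or_lt with rfl | hpos
    · have hb : l.im = 0 := hβb.resolve_left zero_ne_one
      obtain ⟨Q, hQ, hQdet, hRQ⟩ := exists_orthogonal_block_of_row_zero_eq hR hdet (hre hb)
        (by simpa using (eq_smul_row_of_mulVec_eq_single hR h0).symm)
      exact Or.inr (Or.inr ⟨rfl, l.re, sq_eq_one_iff.mp (hre hb), Q, hQ, hQdet,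
        Complex.ext rfl (by simp [hb]), hRQ⟩)
    have hrot := eq_rotation_of_mulVec_eq hR hdet hpos.ne' hab hβb h0 h1
    rcases hβ.2.eq_or_lt with rfl | hlt
    · exact Or.inl ⟨rfl, l.re, l.im, hab, by rw [mul_comm, Complex.re_add_im], hrot⟩
    · have hb : l.im = 0 := hβb.resolve_left hlt.ne
      exact Or.inr (Or.inl ⟨hpos, hlt, l.re, sq_eq_one_iff.mp (hre hb),
        Complex.ext rfl (by simp [hb]), by simpa [hb] using hrot⟩)
  · rintro ⟨rfl, ⟨rfl, x, y, hxy, rfl, rfl⟩ | ⟨-, -, ε, hε, rfl, rfl⟩ |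
      ⟨rfl, ε, hε, Q, -, -, rfl, rfl⟩⟩
    · have hxx : x * x + y * y = 1 := by linear_combination hxy
      have hyy : y * y + x * x = 1 := by linear_combination hxy
      simp [funext_iff, Fin.forall_fin_succ, Pi.single_apply, hxx, hyy, mul_comm y x]
    · have hεε := mul_self_eq_one_iff.mpr hε
      simp [funext_iff, Fin.forall_fin_succ, Pi.single_apply, hεε, mul_right_comm ε β ε]
    · simpa [funext_iff, Fin.forall_fin_succ, Pi.single_apply] using mul_self_eq_one_iff.mpr hε
end

section
/- Let β, β′ ∈ [-1,1], λ ∈ ℂ and R ∈ SO(2). Then λ·(R·(1, iβ)) = (1, iβ′) holds if and only if β = β′ and one of the following is true: (a) β = 1 or β = -1, and there exist x, y ∈ ℝ with x² + y² = 1 such that λ = x + iy and R is the 2×2 matrix with rows (x, -βy), (βy, x); (b) -1 < β < 1 and there exists ε ∈ {1, -1} such that λ = ε and R = ε·I₂. -/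
/-!
An element of SO(2) is the rotation by a unit complex number `z`, and `(1, i)`, `(1, -i)` are its
eigenvectors with eigenvalues `conj z` and `z`. Splitting `(1, iβ)` along them turns the equation
into `l (1 + β) conj z = 1 + β'` and `l (1 - β) z = 1 - β'`. Taking norms gives
`‖l‖ (1 ± β) = 1 ± β'`, so `‖l‖ = 1` and `β = β'`. For `β = ±1` one equation is void and the other
says `l = z` resp. `l = conj z`; for `|β| < 1` both survive, so `l = z = conj z` is real.
-/

open Matrix Complex ComplexConjugate

lemma Matrix.exists_eq_of_mem_specialOrthogonalGroup_fin_two {M : Matrix (Fin 2) (Fin 2) ℝ}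
    (hM : M ∈ specialOrthogonalGroup (Fin 2) ℝ) :
    ∃ z : ℂ, ‖z‖ = 1 ∧ M = !![z.re, -z.im; z.im, z.re] := by
  obtain ⟨h₀₀, h₀₁, hnorm⟩ := mem_specialOrthogonalGroup_fin_two_iff.mp hM
  refine ⟨M 0 0 + M 1 0 * I, ?_, ?_⟩
  · rw [norm_add_mul_I, Real.sqrt_eq_one, ← hnorm, h₀₁]
    ring
  · rw [M.eta_fin_two]; simp [h₀₀, h₀₁]

lemma smul_rotation_mulVec_eq_iff (z l : ℂ) (β β' : ℝ) :
    l • ((!![z.re, -z.im; z.im, z.re].map ofReal) *ᵥ ![1, I * β]) = ![1, I * β'] ↔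
      l * (1 + β) * conj z = 1 + β' ∧ l * (1 - β) * z = 1 - β' := by
  obtain ⟨a, b⟩ := z
  have hconj : conj ⟨a, b⟩ = (a : ℂ) - b * I := by apply Complex.ext <;> simp
  rw [funext_iff, Fin.forall_fin_two, hconj]
  simp only [Pi.smul_apply, mulVec_fin_two, map_apply, of_apply, cons_val_zero, cons_val_one,
    smul_eq_mul, mul_one, ofReal_neg]
  rw [mk_eq_add_mul_I]
  constructor
  · rintro ⟨h₀, h₁⟩
    exact ⟨by linear_combination h₀ - I * h₁ + (l * a * β - β') * I_sq,
      by linear_combination h₀ + I * h₁ - (l * a * β - β') * I_sq⟩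
  · rintro ⟨hplus, hminus⟩
    exact ⟨by linear_combination (hplus + hminus) / 2,
      by linear_combination I * (hplus - hminus) / 2 + l * b * I_sq⟩

lemma eq_of_mul_eq_of_norm_eq_one {u v l : ℂ} {β β' : ℝ} (hu : ‖u‖ = 1) (hv : ‖v‖ = 1)
    (hβ : β ∈ Set.Icc (-1 : ℝ) 1) (hβ' : β' ∈ Set.Icc (-1 : ℝ) 1)
    (hplus : l * (1 + β) * u = 1 + β') (hminus : l * (1 - β) * v = 1 - β') : β = β' := by
  obtain ⟨hβl, hβu⟩ := hβ
  obtain ⟨hβ'l, hβ'u⟩ := hβ'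
  have hnorm {s s' : ℝ} {w : ℂ} (hs : 0 ≤ s) (hs' : 0 ≤ s') (hw : ‖w‖ = 1)
      (h : l * s * w = s') : ‖l‖ * s = s' := by
    simpa [hw, abs_of_nonneg hs, abs_of_nonneg hs'] using congrArg norm h
  have e₁ := hnorm (s := 1 + β) (s' := 1 + β') (by linarith) (by linarith) hu
    (by push_cast; exact hplus)
  have e₂ := hnorm (s := 1 - β) (s' := 1 - β') (by linarith) (by linarith) hv
    (by push_cast; exact hminus)
  linear_combination e₁ - (1 + β) / 2 * (e₁ + e₂)

lemma exists_eq_ofReal_of_mul_eq {z l : ℂ} {β : ℝ} (hzz : conj z * z = 1) (hlo : -1 < β)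
    (hhi : β < 1) (hplus : l * (1 + β) * conj z = 1 + β) (hminus : l * (1 - β) * z = 1 - β) :
    ∃ ε : ℝ, z = ε ∧ l = ε := by
  have hplus_ne : (1 + β : ℂ) ≠ 0 := by exact_mod_cast (by linarith : 0 < 1 + β).ne'
  have hminus_ne : (1 - β : ℂ) ≠ 0 := by exact_mod_cast (by linarith : 0 < 1 - β).ne'
  have h₁ : l * conj z = 1 := mul_left_cancel₀ hplus_ne (by linear_combination hplus)
  have h₂ : l * z = 1 := mul_left_cancel₀ hminus_ne (by linear_combination hminus)
  have hl_z : l = z := by linear_combination z * h₁ - l * hzz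
  have hl_conj : l = conj z := by linear_combination conj z * h₂ - l * hzz
  obtain ⟨ε, hε⟩ := conj_eq_iff_real.mp (hl_conj.symm.trans hl_z)
  exact ⟨ε, hε, hl_z.trans hε⟩

lemma smul_mulVec_eq_of_eq_one_or_eq_neg_one {β x y : ℝ} (hβ : β = 1 ∨ β = -1)
    (hxy : x ^ 2 + y ^ 2 = 1) :
    ((x : ℂ) + I * y) • ((!![x, -β * y; β * y, x].map ofReal) *ᵥ ![1, I * β]) = ![1, I * β] := by
  have hβ2 : (β : ℂ) ^ 2 = 1 := by rcases hβ with rfl | rfl <;> norm_num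
  have hxyℂ : (x : ℂ) ^ 2 + y ^ 2 = 1 := by exact_mod_cast hxy
  rw [funext_iff, Fin.forall_fin_two]
  simp only [Pi.smul_apply, mulVec_fin_two, map_apply, of_apply, cons_val_zero, cons_val_one,
    smul_eq_mul, mul_one, ofReal_neg, ofReal_mul]
  exact ⟨by linear_combination hxyℂ + (y ^ 2 - x * I * y) * hβ2 - y ^ 2 * β ^ 2 * I_sq,
    by linear_combination I * β * hxyℂ + x * y * β * I_sq⟩

/-- Characterization of when `λ·(R·(1, iβ)) = (1, iβ′)` for `R ∈ SO(2)`,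
`β, β′ ∈ [-1,1]` and `λ ∈ ℂ`. -/
theorem stmt4 (β β' : ℝ) (hβ : β ∈ Set.Icc (-1 : ℝ) 1) (hβ' : β' ∈ Set.Icc (-1 : ℝ) 1)
    (l : ℂ) (R : Matrix (Fin 2) (Fin 2) ℝ) (hR : Rᵀ * R = 1) (hdet : R.det = 1) :
    l • ((R.map Complex.ofReal) *ᵥ ![1, Complex.I * (β : ℂ)]) = ![1, Complex.I * (β' : ℂ)] ↔
      β = β' ∧
      (((β = 1 ∨ β = -1) ∧ ∃ x y : ℝ, x ^ 2 + y ^ 2 = 1 ∧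
          l = (x : ℂ) + Complex.I * (y : ℂ) ∧ R = !![x, -β * y; β * y, x]) ∨
       (-1 < β ∧ β < 1 ∧ ∃ ε : ℝ, (ε = 1 ∨ ε = -1) ∧ l = (ε : ℂ) ∧
          R = ε • (1 : Matrix (Fin 2) (Fin 2) ℝ))) := by
  obtain ⟨z, hz, rfl⟩ := exists_eq_of_mem_specialOrthogonalGroup_fin_two
    ⟨(mem_orthogonalGroup_iff' _ _).mpr hR, hdet⟩
  have hzz : conj z * z = 1 := by rw [conj_mul', hz]; simp
  have hre_im : z.re ^ 2 + z.im ^ 2 = 1 := by rw [← sq_norm_sub_sq_im, hz]; ring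
  constructor
  · intro h
    obtain ⟨hplus, hminus⟩ := (smul_rotation_mulVec_eq_iff z l β β').mp h
    obtain rfl := eq_of_mul_eq_of_norm_eq_one (by rwa [norm_conj]) hz hβ hβ' hplus hminus
    refine ⟨rfl, ?_⟩
    rcases hβ.1.eq_or_lt with rfl | hlo
    · refine .inl ⟨.inr rfl, z.re, -z.im, by linear_combination hre_im, ?_, by simp⟩
      have hconj : (z.re : ℂ) + I * (-z.im : ℝ) = conj z := by apply Complex.ext <;> simp
      rw [hconj]
      norm_num at hminus
      linear_combination conj z / 2 * hminus - l * hzz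
    rcases hβ.2.eq_or_lt with rfl | hhi
    · refine .inl ⟨.inl rfl, z.re, z.im, hre_im, ?_, by simp⟩
      rw [mul_comm, re_add_im]
      norm_num at hplus
      linear_combination z / 2 * hplus - l * hzz
    obtain ⟨ε, rfl, rfl⟩ := exists_eq_ofReal_of_mul_eq hzz hlo hhi hplus hminus
    refine .inr ⟨hlo, hhi, ε, (abs_eq zero_le_one).mp (by simpa using hz), rfl, ?_⟩
    ext i j; fin_cases i <;> fin_cases j <;> simp
  · rintro ⟨rfl, ⟨hβ1, x, y, hxy, rfl, hR⟩ | ⟨-, -, ε, hε, rfl, hR⟩⟩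
    · rw [hR]; exact smul_mulVec_eq_of_eq_one_or_eq_neg_one hβ1 hxy
    · rw [hR]; rcases hε with rfl | rfl <;> simp
end

section
/- Let α ∈ ℂ, β ∈ [0,1] and let T_{α,β} ∈ M₂(ℂ) have rows (α, 1+β), (1−β, α), and set S = ℂ·T_{α,β}. Then: (i) {xᴴ : x ∈ S} = S if and only if α ∈ ℝ and β = 0; (ii) I₂ ∉ S. -/
/-!
Conjugate transposition is conjugate-linear, so it maps `ℂ ∙ T` onto `ℂ ∙ Tᴴ`, and
`ℂ ∙ Tᴴ = ℂ ∙ T` exactly when `Tᴴ = c • T` for some `c`. For `T = T_{α,β}` the two off-diagonal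
entries of `Tᴴ = c • T` read `1 - β = c (1 + β)` and `1 + β = c (1 - β)`; their sum forces `c = 1`,
hence `β = 0`, and the diagonal then gives `conj α = α`. Similarly, the off-diagonal entries of
`c • T = 1` add up to `2c = 0`, which contradicts the diagonal `c α = 1`.
-/

open Matrix

section

variable {n R : Type*} [CommSemiring R] [StarRing R]

theorem conjTranspose_image_span_singleton (A : Matrix n n R) :
    (fun x => xᴴ) '' (Submodule.span R {A} : Set (Matrix n n R)) = Submodule.span R {Aᴴ} := by
  have h := Submodule.map_span (conjTransposeLinearEquiv n n R R).toLinearMap {A}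
  rw [Set.image_singleton] at h
  exact congrArg SetLike.coe h

theorem span_conjTranspose_eq_iff (A : Matrix n n R) :
    Submodule.span R {Aᴴ} = Submodule.span R {A} ↔ Aᴴ ∈ Submodule.span R {A} := by
  refine ⟨fun h => h ▸ Submodule.mem_span_singleton_self _, fun h => ?_⟩
  refine le_antisymm ((Submodule.span_singleton_le_iff_mem _ _).2 h) ?_
  obtain ⟨c, hc⟩ := Submodule.mem_span_singleton.1 h
  rw [Submodule.span_singleton_le_iff_mem, Submodule.mem_span_singleton]
  exact ⟨star c, by rw [← conjTranspose_smul, hc, conjTranspose_conjTranspose]⟩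

end

def edgeMatrix (α : ℂ) (β : ℝ) : Matrix (Fin 2) (Fin 2) ℂ :=
  !![α, 1 + (β : ℂ); 1 - (β : ℂ), α]

theorem exists_smul_edgeMatrix_eq_conjTranspose_iff (α : ℂ) (β : ℝ) :
    (∃ c : ℂ, c • edgeMatrix α β = (edgeMatrix α β)ᴴ) ↔ α.im = 0 ∧ β = 0 := by
  constructor
  · rintro ⟨c, hc⟩
    have h00 := congrFun₂ hc 0 0
    have h01 := congrFun₂ hc 0 1
    have h10 := congrFun₂ hc 1 0
    simp only [edgeMatrix, Matrix.smul_apply, of_apply, cons_val', cons_val_zero, cons_val_one,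
      cons_val_fin_one, smul_eq_mul, conjTranspose_apply, RCLike.star_def, star_sub, star_add,
      star_one, Complex.conj_ofReal] at h00 h01 h10
    obtain rfl : c = 1 := by linear_combination (h01 + h10) / 2
    refine ⟨Complex.conj_eq_iff_im.1 (by linear_combination -h00), ?_⟩
    exact_mod_cast (by linear_combination h01 / 2 : (β : ℂ) = 0)
  · rintro ⟨hα, rfl⟩
    refine ⟨1, ?_⟩
    ext i j
    fin_cases i <;> fin_cases j <;> simp [edgeMatrix, Complex.conj_eq_iff_im.2 hα]

theorem one_notMem_span_edgeMatrix (α : ℂ) (β : ℝ) :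
    (1 : Matrix (Fin 2) (Fin 2) ℂ) ∉ Submodule.span ℂ {edgeMatrix α β} := by
  rw [Submodule.mem_span_singleton]
  rintro ⟨c, hc⟩
  have h00 := congrFun₂ hc 0 0
  have h01 := congrFun₂ hc 0 1
  have h10 := congrFun₂ hc 1 0
  simp only [edgeMatrix, Matrix.smul_apply, of_apply, cons_val', cons_val_zero, cons_val_one,
    cons_val_fin_one, smul_eq_mul, one_apply_eq, one_apply_ne, ne_eq, zero_ne_one,
    one_ne_zero, not_false_eq_true] at h00 h01 h10
  obtain rfl : c = 0 := by linear_combination (h01 + h10) / 2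
  simp at h00

theorem stmt7_general (α : ℂ) (β : ℝ) :
    (((fun x => xᴴ) ''
        ((Submodule.span ℂ
          ({!![α, 1 + (β : ℂ); 1 - (β : ℂ), α]} : Set (Matrix (Fin 2) (Fin 2) ℂ))) :
          Set (Matrix (Fin 2) (Fin 2) ℂ)) =
        (Submodule.span ℂ
          ({!![α, 1 + (β : ℂ); 1 - (β : ℂ), α]} : Set (Matrix (Fin 2) (Fin 2) ℂ)))) ↔
      (α.im = 0 ∧ β = 0)) ∧
    (1 : Matrix (Fin 2) (Fin 2) ℂ) ∉
      Submodule.span ℂ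
        ({!![α, 1 + (β : ℂ); 1 - (β : ℂ), α]} : Set (Matrix (Fin 2) (Fin 2) ℂ)) := by
  rw [show !![α, 1 + (β : ℂ); 1 - (β : ℂ), α] = edgeMatrix α β from rfl]
  rw [conjTranspose_image_span_singleton, SetLike.coe_set_eq, span_conjTranspose_eq_iff,
    Submodule.mem_span_singleton, exists_smul_edgeMatrix_eq_conjTranspose_iff]
  exact ⟨Iff.rfl, one_notMem_span_edgeMatrix α β⟩

/-- For `S = ℂ·T_{α,β}` with `T_{α,β} = !![α, 1+β; 1−β, α]`, `β ∈ [0,1]`: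
(i) `S* = S` iff `α ∈ ℝ` and `β = 0`; (ii) `I₂ ∉ S`. -/
theorem stmt7 (α : ℂ) (β : ℝ) (hβ : β ∈ Set.Icc (0 : ℝ) 1) :
    (((fun x => xᴴ) ''
        ((Submodule.span ℂ
          ({!![α, 1 + (β : ℂ); 1 - (β : ℂ), α]} : Set (Matrix (Fin 2) (Fin 2) ℂ))) :
          Set (Matrix (Fin 2) (Fin 2) ℂ)) =
        (Submodule.span ℂ
          ({!![α, 1 + (β : ℂ); 1 - (β : ℂ), α]} : Set (Matrix (Fin 2) (Fin 2) ℂ)))) ↔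
      (α.im = 0 ∧ β = 0)) ∧
    (1 : Matrix (Fin 2) (Fin 2) ℂ) ∉
      Submodule.span ℂ
        ({!![α, 1 + (β : ℂ); 1 - (β : ℂ), α]} : Set (Matrix (Fin 2) (Fin 2) ℂ)) :=
  stmt7_general α β
end

section
/- Let α ∈ ℂ, β ∈ [0,1], let T_{α,β} ∈ M₂(ℂ) have rows (α, 1+β), (1−β, α), set c = |α|² + 1 + β² and s = √(1−β²) (real square root). Then the spectrum of the 4×4 complex matrix c⁻¹·(T_{α,β} ⊗ con(T_{α,β})), where ⊗ is the Kronecker product and con denotes entrywise complex conjugation, equals the set { c⁻¹(α+s)(ᾱ+s), c⁻¹(α−s)(ᾱ+s), c⁻¹(α−s)(ᾱ−s), c⁻¹(α+s)(ᾱ−s) }. -/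
open Matrix Kronecker

/-- The spectrum of the quantum adjacency matrix `c⁻¹·(T_{α,β} ⊗ con(T_{α,β}))` of the
quantum graph `G^(1B)_{α,β}` on `(M₂, τ)`. -/
theorem stmt8 (α : ℂ) (β : ℝ) (hβ : β ∈ Set.Icc (0 : ℝ) 1)
    (T : Matrix (Fin 2) (Fin 2) ℂ) (hT : T = !![α, 1 + (β : ℂ); 1 - (β : ℂ), α])
    (c : ℂ) (hc : c = (‖α‖ : ℂ) ^ 2 + 1 + (β : ℂ) ^ 2)
    (s : ℂ) (hs : s = (Real.sqrt (1 - β ^ 2) : ℝ)) :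
    spectrum ℂ (c⁻¹ • (T ⊗ₖ T.map (starRingEnd ℂ))) =
      ({c⁻¹ * ((α + s) * ((starRingEnd ℂ) α + s)),
        c⁻¹ * ((α - s) * ((starRingEnd ℂ) α + s)),
        c⁻¹ * ((α - s) * ((starRingEnd ℂ) α - s)),
        c⁻¹ * ((α + s) * ((starRingEnd ℂ) α - s))} : Set ℂ) := by
  subst hT
  set b := (starRingEnd ℂ) α with hb
  have habs : ((‖α‖ : ℝ) : ℂ) ^ 2 = α * b := by
    rw [hb, Complex.mul_conj]
    norm_cast
    exact Complex.sq_norm α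
  have hcab : c = α * b + 1 + (β : ℂ) ^ 2 := by rw [hc, habs]
  have hc0 : c ≠ 0 := by
    rw [hc]
    have h2 : ((‖α‖ ^ 2 + 1 + β ^ 2 : ℝ) : ℂ)
        = (‖α‖ : ℂ) ^ 2 + 1 + (β : ℂ) ^ 2 := by push_cast; ring
    rw [← h2]
    exact_mod_cast (by positivity : (‖α‖ ^ 2 + 1 + β ^ 2 : ℝ) ≠ 0)
  have h1 : s ^ 2 = 1 - (β : ℂ) ^ 2 := by
    rw [hs]
    norm_cast
    rw [Real.sq_sqrt (by nlinarith [hβ.1, hβ.2] : (0:ℝ) ≤ 1 - β ^ 2)]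
  ext x
  rw [spectrum.mem_iff, Matrix.isUnit_iff_isUnit_det, isUnit_iff_ne_zero, not_ne_iff,
    ← Matrix.det_submatrix_equiv_self finProdFinEquiv.symm]
  set F : Matrix (Fin 4) (Fin 4) ℂ :=
    !![c * x - α * b, -(α * (1 + (β:ℂ))), -((1 + (β:ℂ)) * b), -((1 + (β:ℂ)) * (1 + (β:ℂ)));
       -(α * (1 - (β:ℂ))), c * x - α * b, -((1 + (β:ℂ)) * (1 - (β:ℂ))), -((1 + (β:ℂ)) * b);
       -((1 - (β:ℂ)) * b), -((1 - (β:ℂ)) * (1 + (β:ℂ))), c * x - α * b, -(α * (1 + (β:ℂ)));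
       -((1 - (β:ℂ)) * (1 - (β:ℂ))), -((1 - (β:ℂ)) * b), -(α * (1 - (β:ℂ))), c * x - α * b]
    with hF
  have hmat : ((algebraMap ℂ (Matrix (Fin 2 × Fin 2) (Fin 2 × Fin 2) ℂ) x -
      c⁻¹ • ((!![α, 1 + (β : ℂ); 1 - (β : ℂ), α]) ⊗ₖ
        (!![α, 1 + (β : ℂ); 1 - (β : ℂ), α]).map (starRingEnd ℂ))).submatrix
      finProdFinEquiv.symm finProdFinEquiv.symm) = c⁻¹ • F := by
    rw [hF]
    ext i j
    fin_cases i <;> fin_cases j <;>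
        simp [finProdFinEquiv, show ((3:Fin 4):ℕ) = 3 from rfl, show ((2:Fin 4):ℕ) = 2 from rfl,
          Prod.ext_iff, Fin.ext_iff, Fin.divNat, Fin.modNat, kroneckerMap_apply,
          Matrix.one_apply, Matrix.smul_apply, Matrix.sub_apply,
          Matrix.algebraMap_eq_diagonal, Matrix.diagonal_apply, ← hb] <;>
      (field_simp; try ring)
  rw [hmat, Matrix.det_smul]
  have hdet : F.det = (c * x - (α + s) * (b + s)) * (c * x - (α - s) * (b + s)) *
      (c * x - (α - s) * (b - s)) * (c * x - (α + s) * (b - s)) := by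
    rw [hF]
    simp [Matrix.det_succ_row_zero, Fin.sum_univ_succ, Matrix.det_fin_three, Matrix.cons_val_succ, Matrix.cons_val_zero, Matrix.cons_val_one, Matrix.head_cons, Fin.succ_zero_eq_one, Fin.succAbove, show (Fin.castSucc (2:Fin 3)) = (2:Fin 4) from rfl, show (Fin.castSucc (1:Fin 3)) = (1:Fin 4) from rfl, show (Fin.castSucc (0:Fin 3)) = (0:Fin 4) from rfl]
    linear_combination (-2*x^2 + -2*x^2*c + 2*s^4*x^2 + 2*s^4*x^2*c + 2*(β:ℂ)^2*x^2 + 4*(β:ℂ)^2*x^2*c + 2*(β:ℂ)^2*s^4*x^2 + 2*(β:ℂ)^4*x^2 + -2*(β:ℂ)^4*x^2*c + -2*(β:ℂ)^6*x^2 + -2*b^2*x^2 + -2*b^2*x^2*c + 2*b^2*s^2*x^2 + 2*b^2*s^2*x^2*c + 2*b^2*(β:ℂ)^2*x^2*c + 2*b^2*(β:ℂ)^2*s^2*x^2 + 2*b^2*(β:ℂ)^4*x^2 + -4*α*b*x + -2*α*b*x^2 + 4*α*b*s^4*x + 2*α*b*s^4*x^2 + 8*α*b*(β:ℂ)^2*x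 + 4*α*b*(β:ℂ)^2*x^2 + -4*α*b*(β:ℂ)^4*x + -2*α*b*(β:ℂ)^4*x^2 + 4*α*b^3*x + -2*α*b^3*x^2 + -4*α*b^3*s^2*x + 2*α*b^3*s^2*x^2 + -4*α*b^3*(β:ℂ)^2*x + 2*α*b^3*(β:ℂ)^2*x^2 + -2*α^2*x^2 + -2*α^2*x^2*c + 2*α^2*s^2*x^2 + 2*α^2*s^2*x^2*c + 2*α^2*(β:ℂ)^2*x^2*c + 2*α^2*(β:ℂ)^2*s^2*x^2 + 2*α^2*(β:ℂ)^4*x^2 + 4*α^3*b*x + -2*α^3*b*x^2 + -4*α^3*b*s^2*x + 2*α^3*b*s^2*x^2 + -4*α^3*b*(β:ℂ)^2*x + 2*α^3*b*(β:ℂ)^2*x^2) * hcab + (-1 + 2*x^2 + -1*s^2 + 2*s^2*x^2 + -1*s^4 + -1*s^6 + 3*(β:ℂ)^2 + 2*(β:ℂ)^2*x^2 + 2*(β:ℂ)^2*s^2 + 4*(β:ℂ)^2*s^2*x^2 + (β:ℂ)^2*s^4 + -3*(β:ℂ)^4 + -2*(β:ℂ)^4*x^2 + -1*(β:ℂ)^4*s^2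 + 2*(β:ℂ)^4*s^2*x^2 + (β:ℂ)^6 + -2*(β:ℂ)^6*x^2 + 2*b^2 + 2*b^2*x^2 + 2*b^2*s^2 + 2*b^2*s^4 + -4*b^2*(β:ℂ)^2 + 4*b^2*(β:ℂ)^2*x^2 + -2*b^2*(β:ℂ)^2*s^2 + 2*b^2*(β:ℂ)^4 + 2*b^2*(β:ℂ)^4*x^2 + -1*b^4 + -1*b^4*s^2 + b^4*(β:ℂ)^2 + 4*α*b*x + 4*α*b*x^2 + 4*α*b*s^2*x + 4*α*b*s^2*x^2 + 4*α*b*(β:ℂ)^2*s^2*x + 4*α*b*(β:ℂ)^2*s^2*x^2 + -4*α*b*(β:ℂ)^4*x + -4*α*b*(β:ℂ)^4*x^2 + -4*α*b^3*x + 4*α*b^3*x^2 + -4*α*b^3*(β:ℂ)^2*x + 4*α*b^3*(β:ℂ)^2*x^2 + 2*α^2 + 2*α^2*x^2 + 2*α^2*s^2 + 2*α^2*s^4 + -4*α^2*(β:ℂ)^2 + 4*α^2*(β:ℂ)^2*x^2 + -2*α^2*(β:ℂ)^2*s^2 + 2*α^2*(β:ℂ)^4 + 2*α^2*(β:ℂ)^4*x^2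 + -4*α^2*b^2 + 4*α^2*b^2*x + 2*α^2*b^2*x^2 + -4*α^2*b^2*s^2 + 4*α^2*b^2*s^2*x + 2*α^2*b^2*s^2*x^2 + 4*α^2*b^2*(β:ℂ)^2 + -4*α^2*b^2*(β:ℂ)^2*x + -2*α^2*b^2*(β:ℂ)^2*x^2 + 2*α^2*b^4 + -4*α^2*b^4*x + 2*α^2*b^4*x^2 + -4*α^3*b*x + 4*α^3*b*x^2 + -4*α^3*b*(β:ℂ)^2*x + 4*α^3*b*(β:ℂ)^2*x^2 + -1*α^4 + -1*α^4*s^2 + α^4*(β:ℂ)^2 + 2*α^4*b^2 + -4*α^4*b^2*x + 2*α^4*b^2*x^2) * h1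
  rw [hdet]
  have hfac : ∀ μ : ℂ, c * x - μ = 0 ↔ x = c⁻¹ * μ := by
    intro μ
    rw [sub_eq_zero]
    constructor
    · intro h; field_simp [← h]; linear_combination h
    · intro h; rw [h]; field_simp
  have hpow : (c⁻¹ : ℂ) ^ Fintype.card (Fin (2 * 2)) ≠ 0 := pow_ne_zero _ (inv_ne_zero hc0)
  simp only [Set.mem_insert_iff, Set.mem_singleton_iff, smul_eq_mul, mul_eq_zero,
    hpow, false_or, hfac, or_assoc]
end

section
/- Let V ⊆ ℂ⁴ be a two-dimensional ℂ-linear subspace containing a vector whose first coordinate is nonzero. Then there exist β ∈ [0,1], γ, δ ∈ ℂ and R ∈ SO(3) such that the image of V under 1⊕R equals the ℂ-linear span of the two vectors (0, 1, iβ, 0) and (1, iβγ, γ, δ). Moreover β is uniquely determined by V: if β′ ∈ [0,1], γ′, δ′ ∈ ℂ and R′ ∈ SO(3) also satisfy this, then β′ = β. -/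
open Matrix

/-- The 4×4 real matrix `1 ⊕ R` for `R` a 3×3 real matrix. -/
def oneOplus3 (R : Matrix (Fin 3) (Fin 3) ℝ) : Matrix (Fin 4) (Fin 4) ℝ :=
  !![1, 0, 0, 0;
     0, R 0 0, R 0 1, R 0 2;
     0, R 1 0, R 1 1, R 1 2;
     0, R 2 0, R 2 1, R 2 2]

lemma perp_exists (a : Fin 3 → ℝ) (ha : a 0^2 + a 1^2 + a 2^2 = 1) :
    ∃ b : Fin 3 → ℝ, (b 0^2 + b 1^2 + b 2^2 = 1) ∧ (a 0*b 0 + a 1*b 1 + a 2*b 2 = 0) := by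
  by_cases h : a 0 = 0 ∧ a 1 = 0
  · refine ⟨![1,0,0], by norm_num; rfl, by simp [h.1, h.2]⟩
  · have hpos : 0 < a 0^2 + a 1^2 := by
      rcases not_and_or.mp h with h'|h'
      · have := sq_nonneg (a 1); have := (pow_pos (abs_pos.mpr h') 2); nlinarith [sq_abs (a 0)]
      · have := sq_nonneg (a 0); have := (pow_pos (abs_pos.mpr h') 2); nlinarith [sq_abs (a 1)]
    set r := Real.sqrt (a 0^2 + a 1^2) with hr
    have hr2 : r^2 = a 0^2 + a 1^2 := Real.sq_sqrt (le_of_lt hpos)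
    have hrpos : 0 < r := Real.sqrt_pos.mpr hpos
    refine ⟨![-(a 1)/r, a 0/r, 0], ?_, ?_⟩
    · simp only [Matrix.cons_val_zero, Matrix.cons_val_one, Matrix.head_cons, Matrix.cons_val_two, Matrix.tail_cons]
      field_simp
      nlinarith [hr2]
    · simp only [Matrix.cons_val_zero, Matrix.cons_val_one, Matrix.head_cons, Matrix.cons_val_two, Matrix.tail_cons]
      field_simp
      ring

lemma exists_phase (s : ℂ) : ∃ ζ : ℂ, ζ ≠ 0 ∧ ‖ζ‖ = 1 ∧ ζ^2 * s = ((‖s‖ : ℝ) : ℂ) := by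
  by_cases hs : s = 0
  · exact ⟨1, one_ne_zero, by simp, by simp [hs]⟩
  · obtain ⟨z, hz⟩ := IsAlgClosed.exists_pow_nat_eq (((‖s‖ : ℝ) : ℂ)/s) (n := 2) (by norm_num)
    have habs : ‖z‖ = 1 := by
      have h2 : ‖z‖ ^ 2 = 1 := by
        rw [← norm_pow, hz, norm_div, Complex.norm_real, Real.norm_eq_abs, abs_of_nonneg (norm_nonneg s),
          div_self (by simpa using hs)]
      nlinarith [norm_nonneg z]
    refine ⟨z, by intro h; simp [h] at habs, habs, ?_⟩
    rw [hz, div_mul_cancel₀ _ hs]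

def rot3_s9 (a b : Fin 3 → ℝ) : Matrix (Fin 3) (Fin 3) ℝ :=
  !![a 0, a 1, a 2; b 0, b 1, b 2;
     a 1 * b 2 - a 2 * b 1, a 2 * b 0 - a 0 * b 2, a 0 * b 1 - a 1 * b 0]

lemma rot3_spec (a b : Fin 3 → ℝ) (ha : a 0 ^ 2 + a 1 ^ 2 + a 2 ^ 2 = 1)
    (hb : b 0 ^ 2 + b 1 ^ 2 + b 2 ^ 2 = 1)
    (hab : a 0 * b 0 + a 1 * b 1 + a 2 * b 2 = 0) :
    (rot3_s9 a b)ᵀ * rot3_s9 a b = 1 ∧ (rot3_s9 a b).det = 1 := by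
  constructor
  · rw [mul_eq_one_comm]
    ext i j
    fin_cases i <;> fin_cases j <;>
      simp [rot3_s9, Matrix.mul_apply, Fin.sum_univ_three, Matrix.one_apply, Matrix.vecHead, Matrix.vecTail, Matrix.transpose_apply] <;> nlinarith [ha, hb, hab]
  · rw [Matrix.det_fin_three]
    simp [rot3_s9]
    nlinarith [ha, hb, hab]

lemma sq3_zero {x y z : ℝ} (h : x^2 + y^2 + z^2 = 0) : x = 0 ∧ y = 0 ∧ z = 0 := by
  refine ⟨?_, ?_, ?_⟩ <;>
    [ (have hx : x^2 = 0 := le_antisymm (by nlinarith [sq_nonneg y, sq_nonneg z]) (sq_nonneg x));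
      (have hx : y^2 = 0 := le_antisymm (by nlinarith [sq_nonneg x, sq_nonneg z]) (sq_nonneg y));
      (have hx : z^2 = 0 := le_antisymm (by nlinarith [sq_nonneg x, sq_nonneg y]) (sq_nonneg z))] <;>
    exact pow_eq_zero_iff two_ne_zero |>.mp hx

lemma funext3 {α : Type*} {x y : Fin 3 → α} (h0 : x 0 = y 0) (h1 : x 1 = y 1)
    (h2 : x 2 = y 2) : x = y := by
  funext j; fin_cases j <;> assumption

lemma funext4 {α : Type*} {x y : Fin 4 → α} (h0 : x 0 = y 0) (h1 : x 1 = y 1)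
    (h2 : x 2 = y 2) (h3 : x 3 = y 3) : x = y := by
  funext j; fin_cases j <;> assumption

lemma normalize3 (u : Fin 3 → ℂ) (hu : u ≠ 0) :
    ∃ β ∈ Set.Icc (0:ℝ) 1, ∃ c : ℂ, c ≠ 0 ∧ ∃ R : Matrix (Fin 3) (Fin 3) ℝ,
      Rᵀ * R = 1 ∧ R.det = 1 ∧
      (R.map Complex.ofReal).mulVec u = c • ![1, Complex.I * (β:ℂ), 0] := by
  obtain ⟨ζ, hζ0, hζ1, hζ2⟩ := exists_phase (u 0^2 + u 1^2 + u 2^2)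
  set w : Fin 3 → ℂ := ζ • u with hwdef
  set a : Fin 3 → ℝ := fun j => (w j).re with hadef
  set b : Fin 3 → ℝ := fun j => (w j).im with hbdef
  clear_value w a b
  obtain ⟨S, hS0, hw⟩ : ∃ S : ℝ, 0 ≤ S ∧ w 0^2 + w 1^2 + w 2^2 = (S : ℂ) := by
    refine ⟨‖u 0^2 + u 1^2 + u 2^2‖, norm_nonneg _, ?_⟩
    rw [← hζ2]; simp only [hwdef, Pi.smul_apply, smul_eq_mul]; ring
  have hwre : ∀ j, w j = (a j : ℂ) + (b j : ℂ) * Complex.I := fun j => by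
    rw [hadef, hbdef]; exact (Complex.re_add_im (w j)).symm
  have hre : a 0^2 + a 1^2 + a 2^2 - (b 0^2 + b 1^2 + b 2^2) = S := by
    have := congrArg Complex.re hw
    simp only [Complex.add_re, Complex.ofReal_re, pow_two, Complex.mul_re] at this
    simp only [hadef, hbdef]; linarith [this]
  have him : a 0 * b 0 + a 1 * b 1 + a 2 * b 2 = 0 := by
    have := congrArg Complex.im hw
    simp only [Complex.add_im, Complex.ofReal_im, pow_two, Complex.mul_im] at this
    simp only [hadef, hbdef]; linarith [this]
  have hba : b 0^2 + b 1^2 + b 2^2 ≤ a 0^2 + a 1^2 + a 2^2 := by linarith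
  have hApos : 0 < a 0^2 + a 1^2 + a 2^2 := by
    rcases lt_or_ge 0 (a 0^2 + a 1^2 + a 2^2) with h | h
    · exact h
    · exfalso; apply hu
      have ha3 : a 0 = 0 ∧ a 1 = 0 ∧ a 2 = 0 :=
        sq3_zero (le_antisymm h (by positivity))
      have hb3 : b 0 = 0 ∧ b 1 = 0 ∧ b 2 = 0 :=
        sq3_zero (by nlinarith [sq_nonneg (b 0), sq_nonneg (b 1), sq_nonneg (b 2)])
      have hu3 : ∀ i : Fin 3, i = 0 ∨ i = 1 ∨ i = 2 → u i = 0 := by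
        intro i hi
        have hwz : w i = 0 := by
          rw [hwre i]
          rcases hi with rfl | rfl | rfl
          · rw [ha3.1, hb3.1]; simp
          · rw [ha3.2.1, hb3.2.1]; simp
          · rw [ha3.2.2, hb3.2.2]; simp
        have : ζ * u i = 0 := by simpa [hwdef] using hwz
        rcases mul_eq_zero.mp this with h' | h'
        · exact absurd h' hζ0
        · exact h'
      funext j
      simp only [Pi.zero_apply]
      fin_cases j
      · exact hu3 0 (Or.inl rfl)
      · exact hu3 1 (Or.inr (Or.inl rfl))
      · exact hu3 2 (Or.inr (Or.inr rfl))
  set na := Real.sqrt (a 0^2 + a 1^2 + a 2^2) with hnadef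
  set nb := Real.sqrt (b 0^2 + b 1^2 + b 2^2) with hnbdef
  have hna2 : na^2 = a 0^2 + a 1^2 + a 2^2 := Real.sq_sqrt (le_of_lt hApos)
  have hBnn : (0:ℝ) ≤ b 0^2 + b 1^2 + b 2^2 := by positivity
  have hnb2 : nb^2 = b 0^2 + b 1^2 + b 2^2 := Real.sq_sqrt hBnn
  have hnapos : 0 < na := Real.sqrt_pos.mpr hApos
  have hnbnn : 0 ≤ nb := Real.sqrt_nonneg _
  have hnbna : nb ≤ na := Real.sqrt_le_sqrt hba
  clear_value na nb
  set β := nb / na with hβdef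
  have hβmem : β ∈ Set.Icc (0:ℝ) 1 :=
    ⟨div_nonneg hnbnn (le_of_lt hnapos), (div_le_one hnapos).mpr hnbna⟩
  clear_value β
  set ah : Fin 3 → ℝ := fun j => a j / na with hahdef
  clear_value ah
  have hah : ah 0^2 + ah 1^2 + ah 2^2 = 1 := by
    rw [hahdef]
    rw [div_pow, div_pow, div_pow, ← add_div, ← add_div, ← hna2]
    exact div_self (pow_ne_zero 2 (ne_of_gt hnapos))
  obtain ⟨bh, hbh1, hbh2, hbh3⟩ :
      ∃ bh : Fin 3 → ℝ, (bh 0^2 + bh 1^2 + bh 2^2 = 1) ∧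
        (ah 0 * bh 0 + ah 1 * bh 1 + ah 2 * bh 2 = 0) ∧
        (b 0 = nb * bh 0 ∧ b 1 = nb * bh 1 ∧ b 2 = nb * bh 2) := by
    by_cases hb : b 0^2 + b 1^2 + b 2^2 = 0
    · have hb3 : b 0 = 0 ∧ b 1 = 0 ∧ b 2 = 0 := sq3_zero hb
      have hnb0 : nb = 0 := by rw [hnbdef, hb, Real.sqrt_zero]
      obtain ⟨bh, h1, h2⟩ := perp_exists ah hah
      exact ⟨bh, h1, h2, by rw [hb3.1, hnb0]; ring, by rw [hb3.2.1, hnb0]; ring,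
        by rw [hb3.2.2, hnb0]; ring⟩
    · have hnbpos : 0 < nb := by
        rw [hnbdef]; exact Real.sqrt_pos.mpr (lt_of_le_of_ne hBnn (Ne.symm hb))
      refine ⟨fun j => b j / nb, ?_, ?_, ?_, ?_, ?_⟩
      · rw [div_pow, div_pow, div_pow, ← add_div, ← add_div, ← hnb2]
        exact div_self (pow_ne_zero 2 (ne_of_gt hnbpos))
      · simp only [hahdef]
        field_simp
        linarith [him]
      · rw [mul_div_cancel₀ _ (ne_of_gt hnbpos)]
      · rw [mul_div_cancel₀ _ (ne_of_gt hnbpos)]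
      · rw [mul_div_cancel₀ _ (ne_of_gt hnbpos)]
  have ha_eq : ∀ j, a j = na * ah j := by
    intro j; simp only [hahdef]; rw [mul_div_cancel₀ _ (ne_of_gt hnapos)]
  obtain ⟨hR1, hR2⟩ := rot3_spec ah bh hah hbh1 hbh2
  refine ⟨β, hβmem, ζ⁻¹ * (na : ℂ), ?_, rot3_s9 ah bh, hR1, hR2, ?_⟩
  · exact mul_ne_zero (inv_ne_zero hζ0) (by exact_mod_cast ne_of_gt hnapos)
  · -- main computation
    have hu_eq : ∀ k, u k = ζ⁻¹ * w k := by
      intro k; rw [hwdef]; simp only [Pi.smul_apply, smul_eq_mul]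
      rw [← mul_assoc, inv_mul_cancel₀ hζ0, one_mul]
    have cah : (ah 0:ℂ)^2 + (ah 1:ℂ)^2 + (ah 2:ℂ)^2 = 1 := by exact_mod_cast hah
    have cbh1 : (bh 0:ℂ)^2 + (bh 1:ℂ)^2 + (bh 2:ℂ)^2 = 1 := by exact_mod_cast hbh1
    have cbh2 : (ah 0:ℂ) * (bh 0:ℂ) + (ah 1:ℂ) * (bh 1:ℂ) + (ah 2:ℂ) * (bh 2:ℂ) = 0 := by
      exact_mod_cast hbh2
    have hβna : β * na = nb := by rw [hβdef]; field_simp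
    have cβ : (β:ℂ) * (na:ℂ) = (nb:ℂ) := by exact_mod_cast hβna
    have hu0 : u 0 = ζ⁻¹ * ((na:ℂ) * (ah 0:ℂ) + (nb:ℂ) * (bh 0:ℂ) * Complex.I) := by
      rw [hu_eq 0, hwre 0, ha_eq 0, hbh3.1]; push_cast; ring
    have hu1 : u 1 = ζ⁻¹ * ((na:ℂ) * (ah 1:ℂ) + (nb:ℂ) * (bh 1:ℂ) * Complex.I) := by
      rw [hu_eq 1, hwre 1, ha_eq 1, hbh3.2.1]; push_cast; ring
    have hu2 : u 2 = ζ⁻¹ * ((na:ℂ) * (ah 2:ℂ) + (nb:ℂ) * (bh 2:ℂ) * Complex.I) := by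
      rw [hu_eq 2, hwre 2, ha_eq 2, hbh3.2.2]; push_cast; ring
    apply funext3 <;>
      simp only [rot3_s9, Matrix.mulVec, dotProduct, Fin.sum_univ_three, Matrix.map_apply,
        Matrix.cons_val', Matrix.cons_val_zero, Matrix.cons_val_one, Matrix.head_cons,
        Matrix.empty_val', Matrix.cons_val_fin_one, Matrix.head_fin_const, Matrix.cons_val_two,
        Matrix.tail_cons, Pi.smul_apply, smul_eq_mul, Matrix.of_apply, hu0, hu1, hu2] <;>
      push_cast
    · linear_combination ζ⁻¹ * (na:ℂ) * cah + ζ⁻¹ * (nb:ℂ) * Complex.I * cbh2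
    · linear_combination ζ⁻¹ * (na:ℂ) * cbh2 + ζ⁻¹ * (nb:ℂ) * Complex.I * cbh1 +
        (- Complex.I) * ζ⁻¹ * cβ
    · ring

-- complexified orthogonality
lemma orthC {R : Matrix (Fin 3) (Fin 3) ℝ} (hR : Rᵀ * R = 1) :
    (R.map Complex.ofReal)ᵀ * (R.map Complex.ofReal) = 1 := by
  rw [← Matrix.transpose_map]
  have : Rᵀ.map Complex.ofReal * R.map Complex.ofReal
      = (Rᵀ * R).map Complex.ofReal := by
    rw [show Complex.ofReal = ⇑Complex.ofRealHom from rfl, Matrix.map_mul]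
  rw [this, hR, Matrix.map_one _ (by simp) (by simp)]

lemma star_mulVec_real (R : Matrix (Fin 3) (Fin 3) ℝ) (u : Fin 3 → ℂ) :
    star ((R.map Complex.ofReal) *ᵥ u) = (R.map Complex.ofReal) *ᵥ (star u) := by
  funext j
  simp only [Pi.star_apply, Matrix.mulVec, dotProduct, Fin.sum_univ_three,
    Matrix.map_apply, star_add, star_mul', Complex.star_def, Complex.conj_ofReal,
    RingHom.map_mul]

lemma orth_dot {R : Matrix (Fin 3) (Fin 3) ℝ} (hR : Rᵀ * R = 1) (u v : Fin 3 → ℂ) :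
    ((R.map Complex.ofReal) *ᵥ u) ⬝ᵥ ((R.map Complex.ofReal) *ᵥ v) = u ⬝ᵥ v := by
  rw [Matrix.dotProduct_mulVec, ← Matrix.mulVec_transpose, Matrix.mulVec_mulVec, orthC hR,
    Matrix.one_mulVec]

lemma orth_dot_sq {R : Matrix (Fin 3) (Fin 3) ℝ} (hR : Rᵀ * R = 1) (u : Fin 3 → ℂ) :
    ((R.map Complex.ofReal) *ᵥ u) ⬝ᵥ ((R.map Complex.ofReal) *ᵥ u) = u ⬝ᵥ u :=
  orth_dot hR u u

lemma orth_dot_star {R : Matrix (Fin 3) (Fin 3) ℝ} (hR : Rᵀ * R = 1) (u : Fin 3 → ℂ) :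
    ((R.map Complex.ofReal) *ᵥ u) ⬝ᵥ star ((R.map Complex.ofReal) *ᵥ u) = u ⬝ᵥ star u := by
  rw [star_mulVec_real, orth_dot hR]

lemma oneOplus3_mulVec (R : Matrix (Fin 3) (Fin 3) ℝ) (x : Fin 4 → ℂ) :
    ((oneOplus3 R).map Complex.ofReal) *ᵥ x
      = ![x 0, ((R.map Complex.ofReal) *ᵥ ![x 1, x 2, x 3]) 0,
          ((R.map Complex.ofReal) *ᵥ ![x 1, x 2, x 3]) 1,
          ((R.map Complex.ofReal) *ᵥ ![x 1, x 2, x 3]) 2] := by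
  apply funext4 <;>
    simp [oneOplus3, Matrix.mulVec, dotProduct, Fin.sum_univ_four, Fin.sum_univ_three,
      Matrix.map_apply] <;> ring

lemma plane_basis (V : Submodule ℂ (Fin 4 → ℂ)) (hdim : Module.finrank ℂ V = 2)
    (hV : ∃ v ∈ V, v 0 ≠ 0) :
    ∃ w ∈ V, ∃ v ∈ V, w ≠ 0 ∧ w 0 = 0 ∧ v 0 ≠ 0 ∧ V = Submodule.span ℂ {w, v} := by
  obtain ⟨v, hvV, hv0⟩ := hV
  set f : V →ₗ[ℂ] ℂ := (LinearMap.proj 0).comp V.subtype with hf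
  have hrange : LinearMap.range f ≠ ⊥ := by
    rw [Submodule.ne_bot_iff]
    exact ⟨v 0, ⟨⟨v, hvV⟩, rfl⟩, hv0⟩
  have hr1 : Module.finrank ℂ (LinearMap.range f) = 1 := by
    have hle : Module.finrank ℂ (LinearMap.range f) ≤ 1 := by
      simpa using Submodule.finrank_le (LinearMap.range f)
    have hpos : 0 < Module.finrank ℂ (LinearMap.range f) := by
      by_contra hp
      push_neg at hp
      have h0 : Module.finrank ℂ (LinearMap.range f) = 0 := by omega
      exact hrange (Submodule.finrank_eq_zero.mp h0)
    omega
  have hker : Module.finrank ℂ (LinearMap.ker f) = 1 := by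
    have := LinearMap.finrank_range_add_finrank_ker f
    rw [hdim, hr1] at this; omega
  have hkerne : LinearMap.ker f ≠ ⊥ := by
    intro h
    rw [h] at hker
    simp at hker
  obtain ⟨x, hxker, hx0⟩ := Submodule.ne_bot_iff _ |>.mp hkerne
  refine ⟨(x : Fin 4 → ℂ), x.2, v, hvV, ?_, ?_, hv0, ?_⟩
  · simpa using hx0
  · exact hxker
  · -- V = span {x, v}
    have hli : LinearIndependent ℂ ![(x : Fin 4 → ℂ), v] := by
      rw [LinearIndependent.pair_iff]
      intro s t hst
      have h0 := congrFun hst 0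
      have hx00 : (x : Fin 4 → ℂ) 0 = 0 := hxker
      simp only [Pi.add_apply, Pi.smul_apply, smul_eq_mul, Pi.zero_apply, hx00, mul_zero,
        zero_add] at h0
      have ht : t = 0 := by
        rcases mul_eq_zero.mp h0 with h | h
        · exact h
        · exact absurd h hv0
      subst ht
      simp only [zero_smul, add_zero, smul_eq_zero] at hst
      rcases hst with h | h
      · exact ⟨h, rfl⟩
      · exact absurd (Subtype.ext h) hx0
    have hle : Submodule.span ℂ {(x : Fin 4 → ℂ), v} ≤ V := by
      rw [Submodule.span_le]
      rintro z (rfl | rfl)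
      · exact x.2
      · exact hvV
    have hrank : Module.finrank ℂ (Submodule.span ℂ {(x : Fin 4 → ℂ), v}) = 2 := by
      have := finrank_span_eq_card hli
      have hrg : Set.range ![(x : Fin 4 → ℂ), v] = {(x : Fin 4 → ℂ), v} := by
        simp [Matrix.range_cons, Matrix.range_empty]
        exact Set.pair_comm _ _
      rw [hrg] at this
      simpa using this
    exact (Submodule.eq_of_le_of_finrank_le hle (by rw [hdim, hrank])).symm

-- Existence core
lemma existence_core (V : Submodule ℂ (Fin 4 → ℂ)) (hdim : Module.finrank ℂ V = 2)
    (hV : ∃ v ∈ V, v 0 ≠ 0) :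
    ∃ β ∈ Set.Icc (0 : ℝ) 1,
      (∃ (γ δ : ℂ) (R : Matrix (Fin 3) (Fin 3) ℝ), Rᵀ * R = 1 ∧ R.det = 1 ∧
        Submodule.map (((oneOplus3 R).map Complex.ofReal).mulVecLin) V =
          Submodule.span ℂ
            ({![0, 1, Complex.I * (β : ℂ), 0],
              ![1, Complex.I * (β : ℂ) * γ, γ, δ]} : Set (Fin 4 → ℂ))) := by
  obtain ⟨w, hwV, v, hvV, hwne, hw0, hv0, hVspan⟩ := plane_basis V hdim hV
  have hu3 : ![w 1, w 2, w 3] ≠ 0 := by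
    intro h
    apply hwne
    apply funext4
    · simpa using hw0
    · simpa using congrFun h 0
    · simpa using congrFun h 1
    · simpa using congrFun h 2
  obtain ⟨β, hβ, c, hc, R, hR1, hR2, hRu⟩ := normalize3 _ hu3
  set M := (oneOplus3 R).map Complex.ofReal with hM
  have hMw : M *ᵥ w = c • ![0, 1, Complex.I * (β:ℂ), 0] := by
    rw [hM, oneOplus3_mulVec, hRu]
    apply funext4 <;> simp [hw0]
  have hMv0 : (M *ᵥ v) 0 = v 0 := by rw [hM, oneOplus3_mulVec]; simp
  set p := M *ᵥ v with hp
  set β2 : ℂ := 1 + (β:ℂ)^2 with hβ2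
  have hβ2ne : β2 ≠ 0 := by
    have hcast : ((1 + β^2 : ℝ) : ℂ) = β2 := by rw [hβ2]; push_cast; ring
    intro h
    rw [← hcast] at h
    have h2 : (1 + β^2 : ℝ) = 0 := by exact_mod_cast h
    nlinarith [sq_nonneg β]
  set t : ℂ := (p 1 / v 0 - Complex.I * (β:ℂ) * (p 2 / v 0)) / β2 with ht
  set γ : ℂ := p 2 / v 0 - Complex.I * (β:ℂ) * t with hγ
  set δ : ℂ := p 3 / v 0 with hδ
  have hpg : p = (v 0) • ![1, Complex.I * (β:ℂ) * γ, γ, δ]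
      + ((v 0) * t) • ![0, 1, Complex.I * (β:ℂ), 0] := by
    apply funext4 <;>
      simp only [Pi.add_apply, Pi.smul_apply, smul_eq_mul, Matrix.cons_val_zero,
        Matrix.cons_val_one, Matrix.head_cons, Matrix.cons_val_two, Matrix.tail_cons,
        Matrix.cons_val_three]
    · rw [hMv0]; ring
    · rw [hγ, ht]
      field_simp
      rw [hβ2]
      linear_combination (p 1 * (β:ℂ)^2 - p 2 * (β:ℂ)^3 * Complex.I) * Complex.I_sq
    · rw [hγ]; field_simp; try ring
    · rw [hδ]; field_simp; ring
  refine ⟨β, hβ, γ, δ, R, hR1, hR2, ?_⟩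
  rw [hVspan, Submodule.map_span, Set.image_pair]
  simp only [Matrix.mulVecLin_apply]
  apply le_antisymm <;> rw [Submodule.span_le] <;> rintro z (rfl | rfl)
  · -- M *ᵥ w ∈ span {e, g}
    apply SetLike.mem_coe.mpr
    apply Submodule.mem_span_pair.mpr
    exact ⟨c, 0, by rw [← hM, hMw]; simp⟩
  · apply SetLike.mem_coe.mpr
    apply Submodule.mem_span_pair.mpr
    exact ⟨(v 0) * t, v 0, by rw [← hM, ← hp, hpg]; ring⟩
  · -- e ∈ span {M*ᵥw, M*ᵥv}
    apply SetLike.mem_coe.mpr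
    apply Submodule.mem_span_pair.mpr
    refine ⟨c⁻¹, 0, ?_⟩
    rw [← hM, hMw]
    rw [smul_smul, inv_mul_cancel₀ hc]
    simp
  · apply SetLike.mem_coe.mpr
    apply Submodule.mem_span_pair.mpr
    refine ⟨-(t * c⁻¹), (v 0)⁻¹, ?_⟩
    rw [← hM, hMw, ← hp, hpg]
    apply funext4 <;>
      simp only [Pi.add_apply, Pi.smul_apply, smul_eq_mul, Matrix.cons_val_zero,
        Matrix.cons_val_one, Matrix.head_cons, Matrix.cons_val_two, Matrix.tail_cons,
        Matrix.cons_val_three] <;>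
      field_simp <;> ring

lemma beta_unique (V : Submodule ℂ (Fin 4 → ℂ)) (β β' : ℝ)
    (hβ : β ∈ Set.Icc (0:ℝ) 1) (hβ' : β' ∈ Set.Icc (0:ℝ) 1)
    (γ δ : ℂ) (R : Matrix (Fin 3) (Fin 3) ℝ) (hR1 : Rᵀ * R = 1)
    (hmap : Submodule.map (((oneOplus3 R).map Complex.ofReal).mulVecLin) V =
      Submodule.span ℂ
        ({![0, 1, Complex.I * (β : ℂ), 0],
          ![1, Complex.I * (β : ℂ) * γ, γ, δ]} : Set (Fin 4 → ℂ)))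
    (γ' δ' : ℂ) (R' : Matrix (Fin 3) (Fin 3) ℝ) (hR1' : R'ᵀ * R' = 1)
    (hmap' : Submodule.map (((oneOplus3 R').map Complex.ofReal).mulVecLin) V =
      Submodule.span ℂ
        ({![0, 1, Complex.I * (β' : ℂ), 0],
          ![1, Complex.I * (β' : ℂ) * γ', γ', δ']} : Set (Fin 4 → ℂ))) :
    β' = β := by
  -- extract x ∈ V mapping to e β
  have he : (![0, 1, Complex.I * (β:ℂ), 0] : Fin 4 → ℂ) ∈
      Submodule.map (((oneOplus3 R).map Complex.ofReal).mulVecLin) V := by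
    rw [hmap]
    exact Submodule.subset_span (Set.mem_insert _ _)
  obtain ⟨x, hxV, hMx⟩ := Submodule.mem_map.mp he
  rw [Matrix.mulVecLin_apply, oneOplus3_mulVec] at hMx
  have hx0 : x 0 = 0 := by simpa using congrFun hMx 0
  have hRu : (R.map Complex.ofReal) *ᵥ ![x 1, x 2, x 3] = ![1, Complex.I * (β:ℂ), 0] := by
    apply funext3
    · simpa using congrFun hMx 1
    · simpa using congrFun hMx 2
    · simpa using congrFun hMx 3
  -- x maps into the second span
  have hx' : ((oneOplus3 R').map Complex.ofReal) *ᵥ x ∈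
      Submodule.span ℂ ({![0, 1, Complex.I * (β':ℂ), 0],
        ![1, Complex.I * (β':ℂ) * γ', γ', δ']} : Set (Fin 4 → ℂ)) := by
    rw [← hmap']
    exact ⟨x, hxV, by rw [Matrix.mulVecLin_apply]⟩
  obtain ⟨s, t, hst⟩ := Submodule.mem_span_pair.mp hx'
  have hx0' : (((oneOplus3 R').map Complex.ofReal) *ᵥ x) 0 = 0 := by
    rw [oneOplus3_mulVec]; simpa using hx0
  have ht0 : t = 0 := by
    have h := congrFun hst 0
    rw [hx0'] at h
    simpa using h
  rw [ht0, zero_smul, add_zero] at hst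
  -- so M' x = s • e'
  have hR'u : (R'.map Complex.ofReal) *ᵥ ![x 1, x 2, x 3]
      = s • ![1, Complex.I * (β':ℂ), 0] := by
    have hMx' : ((oneOplus3 R').map Complex.ofReal) *ᵥ x
        = s • ![0, 1, Complex.I * (β':ℂ), 0] := hst.symm
    rw [oneOplus3_mulVec] at hMx'
    apply funext3
    · simpa using congrFun hMx' 1
    · simpa using congrFun hMx' 2
    · simpa using congrFun hMx' 3
  -- invariants
  have q1 := orth_dot_sq hR1 ![x 1, x 2, x 3]
  have q2 := orth_dot_sq hR1' ![x 1, x 2, x 3]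
  have h1 := orth_dot_star hR1 ![x 1, x 2, x 3]
  have h2 := orth_dot_star hR1' ![x 1, x 2, x 3]
  rw [hRu] at q1 h1
  rw [hR'u] at q2 h2
  have e1 : ((1 - β^2 : ℝ) : ℂ) = s^2 * ((1 - β'^2 : ℝ) : ℂ) := by
    rw [← q2] at q1
    simp only [dotProduct, Fin.sum_univ_three, Matrix.cons_val_zero,
      Matrix.cons_val_one, Matrix.head_cons, Matrix.cons_val_two, Matrix.tail_cons,
      Pi.smul_apply, smul_eq_mul] at q1
    push_cast
    linear_combination q1 + (s^2*(β':ℂ)^2 - (β:ℂ)^2) * Complex.I_sq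
  have e2 : ((1 + β^2 : ℝ) : ℂ) = (Complex.normSq s : ℂ) * ((1 + β'^2 : ℝ) : ℂ) := by
    rw [← h2] at h1
    simp only [dotProduct, Fin.sum_univ_three, Matrix.cons_val_zero,
      Matrix.cons_val_one, Matrix.head_cons, Matrix.cons_val_two, Matrix.tail_cons,
      Pi.smul_apply, smul_eq_mul, Pi.star_apply, star_mul', star_smul, Complex.star_def,
      _root_.map_mul, _root_.map_one, _root_.map_zero, Complex.conj_I,
      Complex.conj_ofReal] at h1
    rw [← Complex.mul_conj]
    push_cast
    linear_combination h1 + ((β:ℂ)^2 - s * (starRingEnd ℂ) s * (β':ℂ)^2) * Complex.I_sq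
  -- pass to real statements
  have habs : ‖s‖ ^ 2 * (1 - β'^2) = 1 - β^2 := by
    have := congrArg norm e1
    rw [norm_mul, norm_pow, Complex.norm_real, Complex.norm_real, Real.norm_eq_abs, Real.norm_eq_abs,
      abs_of_nonneg (by nlinarith [hβ.1, hβ.2] : (0:ℝ) ≤ 1 - β^2),
      abs_of_nonneg (by nlinarith [hβ'.1, hβ'.2] : (0:ℝ) ≤ 1 - β'^2)] at this
    linarith [this]
  have hnorm : Complex.normSq s * (1 + β'^2) = 1 + β^2 := by
    have : (1 + β^2 : ℝ) = Complex.normSq s * (1 + β'^2) := by exact_mod_cast e2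
    linarith [this]
  have hsq : ‖s‖ ^ 2 = Complex.normSq s := Complex.sq_norm s
  rw [hsq] at habs
  have hb2 : β'^2 = β^2 := by nlinarith [hβ.1, hβ.2, hβ'.1, hβ'.2]
  have : β' = β := by nlinarith [hβ.1, hβ'.1, sq_nonneg (β' - β), sq_nonneg (β' + β)]
  exact this

/-- Every plane `V ⊆ ℂ⁴` not orthogonal to `e₁` can be rotated (by `1⊕R`, `R ∈ SO(3)`)
into `span{(0,1,iβ,0), (1,iβγ,γ,δ)}` for some `β ∈ [0,1]`, `γ, δ ∈ ℂ`, and `β` is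
uniquely determined by `V`. -/
theorem stmt9 (V : Submodule ℂ (Fin 4 → ℂ)) (hdim : Module.finrank ℂ V = 2)
    (hV : ∃ v ∈ V, v 0 ≠ 0) :
    ∃ β ∈ Set.Icc (0 : ℝ) 1,
      (∃ (γ δ : ℂ) (R : Matrix (Fin 3) (Fin 3) ℝ), Rᵀ * R = 1 ∧ R.det = 1 ∧
        Submodule.map (((oneOplus3 R).map Complex.ofReal).mulVecLin) V =
          Submodule.span ℂ
            ({![0, 1, Complex.I * (β : ℂ), 0],
              ![1, Complex.I * (β : ℂ) * γ, γ, δ]} : Set (Fin 4 → ℂ))) ∧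
      (∀ β' ∈ Set.Icc (0 : ℝ) 1,
        (∃ (γ' δ' : ℂ) (R' : Matrix (Fin 3) (Fin 3) ℝ), R'ᵀ * R' = 1 ∧ R'.det = 1 ∧
          Submodule.map (((oneOplus3 R').map Complex.ofReal).mulVecLin) V =
            Submodule.span ℂ
              ({![0, 1, Complex.I * (β' : ℂ), 0],
                ![1, Complex.I * (β' : ℂ) * γ', γ', δ']} : Set (Fin 4 → ℂ))) →
        β' = β) := by
  obtain ⟨β, hβ, hex⟩ := existence_core V hdim hV
  refine ⟨β, hβ, hex, ?_⟩
  rintro β' hβ' ⟨γ', δ', R', h1', h2', hmap'⟩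
  obtain ⟨γ, δ, R, hR1, hR2, hmap⟩ := hex
  exact beta_unique V β β' hβ hβ' γ δ R hR1 hmap γ' δ' R' h1' hmap'
end

section
/- For every nonzero vector v ∈ ℂ⁴, exactly one of the following holds: (A) v lies in the ℂ-linear span of e₁ = (1,0,0,0); (B) there exists a unique α ∈ ℂ such that v lies in the ℂ-linear span of (α, 0, 0, 1); (C) there exists a unique triple (α, β, γ) ∈ J^(1C) such that λ·((1⊕R⊕1)·v) = (α, 1, iβ, γ) holds for some λ ∈ ℂ and some R ∈ SO(2). -/
open Matrix

/-- The index set `J^(1C)`: triples `(α, β, γ) ∈ ℂ × [-1,1] × ℂ` such that: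
if `β = ±1` and `α ≠ 0` then `α ∈ (0,∞)`; if `β = ±1` and `α = 0` then `γ ∈ [0,∞)`;
if `−1 < β < 1` and `α ≠ 0` then `arg(α) ∈ [0, π)`;
if `−1 < β < 1` and `α = 0` then `arg(γ) ∈ [0, π)`. -/
def J1C (p : ℂ × ℝ × ℂ) : Prop :=
  p.2.1 ∈ Set.Icc (-1 : ℝ) 1 ∧
  ((p.2.1 = 1 ∨ p.2.1 = -1) → p.1 ≠ 0 → p.1.im = 0 ∧ 0 < p.1.re) ∧
  ((p.2.1 = 1 ∨ p.2.1 = -1) → p.1 = 0 → p.2.2.im = 0 ∧ 0 ≤ p.2.2.re) ∧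
  ((-1 < p.2.1 ∧ p.2.1 < 1) → p.1 ≠ 0 → p.1.arg ∈ Set.Ico 0 Real.pi) ∧
  ((-1 < p.2.1 ∧ p.2.1 < 1) → p.1 = 0 → p.2.2.arg ∈ Set.Ico 0 Real.pi)

/-- The 4×4 real block-diagonal matrix `1 ⊕ R ⊕ 1` for `R` a 2×2 real matrix. -/
def oneOplus2Oplus1 (R : Matrix (Fin 2) (Fin 2) ℝ) : Matrix (Fin 4) (Fin 4) ℝ :=
  !![1, 0, 0, 0;
     0, R 0 0, R 0 1, 0;
     0, R 1 0, R 1 1, 0;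
     0, 0, 0, 1]

noncomputable def Complex.abs : AbsoluteValue ℂ ℝ :=
  IsAbsoluteValue.toAbsoluteValue (norm : ℂ → ℝ)

lemma Complex.abs_apply' (z : ℂ) : Complex.abs z = ‖z‖ := rfl

lemma Complex.abs_conj (z : ℂ) : Complex.abs ((starRingEnd ℂ) z) = Complex.abs z := by
  simp only [Complex.abs_apply', Complex.norm_conj]

lemma Complex.abs_ofReal (r : ℝ) : Complex.abs (r : ℂ) = |r| := by
  simp only [Complex.abs_apply', Complex.norm_real, Real.norm_eq_abs]

lemma Complex.abs_two : Complex.abs 2 = 2 := by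
  simp only [Complex.abs_apply', Complex.norm_two]

lemma Complex.normSq_eq_abs (z : ℂ) : Complex.normSq z = Complex.abs z ^ 2 := by
  simp only [Complex.abs_apply', Complex.normSq_eq_norm_sq]

lemma Complex.abs_mul_exp_arg_mul_I (z : ℂ) :
    ((Complex.abs z : ℝ) : ℂ) * Complex.exp ((z.arg : ℂ) * Complex.I) = z :=
  Complex.norm_mul_exp_arg_mul_I z

lemma matrix_iff (v : Fin 4 → ℂ) (t : ℂ × ℝ × ℂ) :
    (∃ (l : ℂ) (R : Matrix (Fin 2) (Fin 2) ℝ), Rᵀ * R = 1 ∧ R.det = 1 ∧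
        l • (((oneOplus2Oplus1 R).map Complex.ofReal) *ᵥ v) =
          ![t.1, 1, Complex.I * (t.2.1 : ℂ), t.2.2])
    ↔ ∃ l e : ℂ, e * (starRingEnd ℂ) e = 1 ∧
        l * e * (v 1 + Complex.I * v 2) = 1 - (t.2.1 : ℂ) ∧
        l * (starRingEnd ℂ) e * (v 1 - Complex.I * v 2) = 1 + (t.2.1 : ℂ) ∧
        l * v 0 = t.1 ∧ l * v 3 = t.2.2 := by
  constructor
  · rintro ⟨l, R, hR, hdet, heq⟩
    have h00 := congrFun (congrFun hR 0) 0
    have h01 := congrFun (congrFun hR 0) 1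
    have h11 := congrFun (congrFun hR 1) 1
    simp [Matrix.mul_apply, Fin.sum_univ_two, Matrix.transpose_apply, Matrix.one_apply] at h00 h01 h11
    rw [Matrix.det_fin_two] at hdet
    have hd : R 1 1 = R 0 0 := by nlinarith [sq_nonneg (R 1 1 - R 0 0), sq_nonneg (R 0 1 + R 1 0)]
    have hb : R 0 1 = - R 1 0 := by nlinarith [sq_nonneg (R 1 1 - R 0 0), sq_nonneg (R 0 1 + R 1 0)]
    have e0 := congrFun heq 0
    have e1 := congrFun heq 1
    have e2 := congrFun heq 2
    have e3 := congrFun heq 3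
    simp [oneOplus2Oplus1, Matrix.mulVec, dotProduct, Fin.sum_univ_four, Matrix.map_apply] at e0 e1 e2 e3
    rw [hb] at e1
    rw [hd] at e2
    refine ⟨l, (R 0 0 : ℂ) + (R 1 0 : ℂ) * Complex.I, ?_, ?_, ?_, e0, e3⟩
    · have hns : (R 0 0 : ℝ)^2 + (R 1 0 : ℝ)^2 = 1 := by nlinarith
      have hc : ((R 0 0 : ℝ) : ℂ)^2 + ((R 1 0 : ℝ) : ℂ)^2 = 1 := by exact_mod_cast congrArg (Complex.ofReal) hns
      simp only [map_add, _root_.map_mul, Complex.conj_ofReal, Complex.conj_I]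
      linear_combination hc - ((R 1 0 : ℝ) : ℂ)^2 * Complex.I_sq
    · push_cast at e1 e2 ⊢
      linear_combination e1 + Complex.I * e2 + (l * (R 1 0 : ℂ) * v 2 + (t.2.1 : ℂ)) * Complex.I_sq
    · simp only [map_add, _root_.map_mul, Complex.conj_ofReal, Complex.conj_I]
      push_cast at e1 e2 ⊢
      linear_combination e1 - Complex.I * e2 + (l * (R 1 0 : ℂ) * v 2 - (t.2.1 : ℂ)) * Complex.I_sq
  · rintro ⟨l, e, he, h1, h2, h0, h3⟩
    have hns : e.re^2 + e.im^2 = 1 := by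
      have h := Complex.mul_conj e
      rw [he] at h
      have h2 := congrArg Complex.re h.symm
      simp [Complex.normSq_apply] at h2
      nlinarith [h2]
    refine ⟨l, !![e.re, -e.im; e.im, e.re], ?_, ?_, ?_⟩
    · have hT : (!![e.re, -e.im; e.im, e.re])ᵀ = !![e.re, e.im; -e.im, e.re] := by
        ext i j; fin_cases i <;> fin_cases j <;> rfl
      rw [hT]
      ext i j
      fin_cases i <;> fin_cases j <;>
        simp [Matrix.mul_apply, Fin.sum_univ_two, Matrix.one_apply] <;> nlinarith
    · rw [Matrix.det_fin_two]; simp; nlinarith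
    · have hee : e = (e.re : ℂ) + (e.im : ℂ) * Complex.I := (Complex.re_add_im e).symm
      have hce : (starRingEnd ℂ) e = (e.re : ℂ) - (e.im : ℂ) * Complex.I := by
        simp [Complex.ext_iff]
      rw [hee] at h1; rw [hce] at h2
      funext i
      fin_cases i
      · simpa [oneOplus2Oplus1, Matrix.mulVec, dotProduct, Fin.sum_univ_four, Matrix.map_apply] using h0
      · simp [oneOplus2Oplus1, Matrix.mulVec, dotProduct, Fin.sum_univ_four, Matrix.map_apply]
        linear_combination (h1 + h2) / 2 - l * (e.im : ℂ) * v 2 * Complex.I_sq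
      · simp [oneOplus2Oplus1, Matrix.mulVec, dotProduct, Fin.sum_univ_four, Matrix.map_apply]
        linear_combination (Complex.I/2) * h2 - (Complex.I/2) * h1 + (l * (e.im : ℂ) * v 1 + l * (e.re : ℂ) * v 2) * Complex.I_sq
      · simpa [oneOplus2Oplus1, Matrix.mulVec, dotProduct, Fin.sum_univ_four, Matrix.map_apply] using h3

lemma unit_abs {e : ℂ} (he : e * (starRingEnd ℂ) e = 1) : Complex.abs e = 1 := by
  have h := congrArg Complex.abs he
  rw [_root_.map_mul, Complex.abs_conj, _root_.map_one] at h
  have h2 : Complex.abs e ^ 2 = 1 := by nlinarith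
  calc Complex.abs e = Real.sqrt (Complex.abs e ^ 2) := (Real.sqrt_sq (Complex.abs.nonneg e)).symm
    _ = 1 := by rw [h2]; exact Real.sqrt_one

lemma argIco_iff {z : ℂ} (hz : z ≠ 0) :
    z.arg ∈ Set.Ico 0 Real.pi ↔ (0 < z.im ∨ (z.im = 0 ∧ 0 < z.re)) := by
  rw [Set.mem_Ico, Complex.arg_nonneg_iff]
  constructor
  · rintro ⟨h0, hpi⟩
    rcases lt_or_eq_of_le h0 with h | h
    · exact Or.inl h
    · refine Or.inr ⟨h.symm, ?_⟩
      have hne : z.arg ≠ Real.pi := ne_of_lt hpi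
      rw [Ne, Complex.arg_eq_pi_iff] at hne
      push_neg at hne
      rcases lt_trichotomy z.re 0 with hr | hr | hr
      · exact absurd h.symm (hne hr)
      · exact absurd (Complex.ext hr h.symm : z = 0) hz
      · exact hr
  · rintro (h | ⟨h0, hr⟩)
    · refine ⟨le_of_lt h, lt_of_le_of_ne (Complex.arg_le_pi z) ?_⟩
      rw [Ne, Complex.arg_eq_pi_iff]; rintro ⟨-, hzero⟩; linarith
    · refine ⟨h0.ge, lt_of_le_of_ne (Complex.arg_le_pi z) ?_⟩
      rw [Ne, Complex.arg_eq_pi_iff]; rintro ⟨hneg, -⟩; linarith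

lemma argIco_neg {z : ℂ} (hz : z ≠ 0) (h : z.arg ∈ Set.Ico 0 Real.pi)
    (h' : (-z).arg ∈ Set.Ico 0 Real.pi) : False := by
  rw [argIco_iff hz] at h
  rw [argIco_iff (neg_ne_zero.mpr hz)] at h'
  simp only [Complex.neg_im, Complex.neg_re] at h'
  rcases h with h | ⟨h0, hr⟩ <;> rcases h' with h' | ⟨h0', hr'⟩ <;> linarith

lemma argIco_choice (z : ℂ) : ∃ σ : ℂ, (σ = 1 ∨ σ = -1) ∧ (σ * z).arg ∈ Set.Ico 0 Real.pi := by
  by_cases hz : z = 0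
  · exact ⟨1, Or.inl rfl, by simp [hz, Complex.arg_zero, Real.pi_pos]⟩
  · by_cases h : z.arg ∈ Set.Ico 0 Real.pi
    · exact ⟨1, Or.inl rfl, by rw [one_mul]; exact h⟩
    · refine ⟨-1, Or.inr rfl, ?_⟩
      have hrw : (-1 : ℂ) * z = -z := by ring
      rw [hrw, argIco_iff (neg_ne_zero.mpr hz)]
      rw [argIco_iff hz] at h
      push_neg at h
      simp only [Complex.neg_im, Complex.neg_re]
      rcases lt_trichotomy z.im 0 with him | him | him
      · exact Or.inl (by linarith)
      · have hre : z.re ≤ 0 := h.2 him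
        have hre' : z.re ≠ 0 := fun h0 => hz (Complex.ext h0 him)
        exact Or.inr ⟨by linarith, by cases lt_or_eq_of_le hre with
          | inl h => linarith
          | inr h => exact absurd h hre'⟩
      · exact absurd him (not_lt.mpr h.1)

lemma unit_phase (z : ℂ) (hz : z ≠ 0) :
    ∃ φ : ℂ, φ * (starRingEnd ℂ) φ = 1 ∧ φ * z = ((Complex.abs z : ℝ) : ℂ) := by
  have habs : ((Complex.abs z : ℝ) : ℂ) ≠ 0 := by
    exact_mod_cast (Complex.abs.ne_zero hz)
  have key : (starRingEnd ℂ) z * z = ((Complex.abs z : ℝ) : ℂ) * ((Complex.abs z : ℝ) : ℂ) := by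
    rw [mul_comm, Complex.mul_conj]
    norm_cast
    rw [Complex.normSq_eq_abs]; ring
  refine ⟨(starRingEnd ℂ) z / ((Complex.abs z : ℝ) : ℂ), ?_, ?_⟩
  · rw [map_div₀, Complex.conj_conj, Complex.conj_ofReal, div_mul_div_comm, key]
    exact div_self (mul_ne_zero habs habs)
  · rw [div_mul_eq_mul_div, key, mul_div_assoc, div_self habs, mul_one]

lemma caseC_uniq (v : Fin 4 → ℂ) :
    ∀ t t' : ℂ × ℝ × ℂ,
      (J1C t ∧ ∃ l e : ℂ, e * (starRingEnd ℂ) e = 1 ∧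
        l * e * (v 1 + Complex.I * v 2) = 1 - (t.2.1 : ℂ) ∧
        l * (starRingEnd ℂ) e * (v 1 - Complex.I * v 2) = 1 + (t.2.1 : ℂ) ∧
        l * v 0 = t.1 ∧ l * v 3 = t.2.2) →
      (J1C t' ∧ ∃ l e : ℂ, e * (starRingEnd ℂ) e = 1 ∧
        l * e * (v 1 + Complex.I * v 2) = 1 - (t'.2.1 : ℂ) ∧
        l * (starRingEnd ℂ) e * (v 1 - Complex.I * v 2) = 1 + (t'.2.1 : ℂ) ∧
        l * v 0 = t'.1 ∧ l * v 3 = t'.2.2) →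
      t = t' := by
  rintro ⟨α, β, γ⟩ ⟨α', β', γ'⟩ ⟨hJ, l, e, he, A1, A2, hα, hγ⟩ ⟨hJ', l', e', he', A1', A2', hα', hγ'⟩
  dsimp only at A1 A2 hα hγ A1' A2' hα' hγ'
  simp only [Prod.ext_iff]
  set p : ℂ := v 1 + Complex.I * v 2 with hpdef
  set q : ℂ := v 1 - Complex.I * v 2 with hqdef
  have hEabs : Complex.abs e = 1 := unit_abs he
  have hEabs' : Complex.abs e' = 1 := unit_abs he'
  have hene : e ≠ 0 := fun h => by simp [h] at hEabs
  have hene' : e' ≠ 0 := fun h => by simp [h] at hEabs'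
  have hl : l ≠ 0 := by
    intro h; rw [h] at A1 A2
    have h2 : (2 : ℂ) = 0 := by linear_combination -A1 - A2
    norm_num at h2
  have hl' : l' ≠ 0 := by
    intro h; rw [h] at A1' A2'
    have h2 : (2 : ℂ) = 0 := by linear_combination -A1' - A2'
    norm_num at h2
  have habsl : 0 < Complex.abs l := Complex.abs.pos hl
  have habsl' : 0 < Complex.abs l' := Complex.abs.pos hl'
  by_cases hq0 : q = 0
  · -- β = β' = -1
    have hb : β = -1 := by
      have h0 : ((1 + β : ℝ) : ℂ) = 0 := by push_cast; rw [hq0] at A2; linear_combination -A2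
      have h1 : (1 : ℝ) + β = 0 := by exact_mod_cast h0
      linarith
    have hb' : β' = -1 := by
      have h0 : ((1 + β' : ℝ) : ℂ) = 0 := by push_cast; rw [hq0] at A2'; linear_combination -A2'
      have h1 : (1 : ℝ) + β' = 0 := by exact_mod_cast h0
      linarith
    have B1 : l * e * p = 2 := by rw [hb] at A1; push_cast at A1; linear_combination A1
    have B1' : l' * e' * p = 2 := by rw [hb'] at A1'; push_cast at A1'; linear_combination A1'
    have hp0 : p ≠ 0 := by
      intro h; rw [h, mul_zero] at B1; norm_num at B1
    have habs : Complex.abs l * Complex.abs p = 2 := by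
      have := congrArg Complex.abs B1
      rwa [_root_.map_mul, _root_.map_mul, hEabs, mul_one, Complex.abs_two] at this
    have habs' : Complex.abs l' * Complex.abs p = 2 := by
      have := congrArg Complex.abs B1'
      rwa [_root_.map_mul, _root_.map_mul, hEabs', mul_one, Complex.abs_two] at this
    have habsP : 0 < Complex.abs p := Complex.abs.pos hp0
    have hll : Complex.abs l = Complex.abs l' := by
      have := habs.trans habs'.symm
      exact mul_right_cancel₀ (ne_of_gt habsP) this
    by_cases hv0 : v 0 = 0
    · have ha0 : α = 0 := by rw [← hα, hv0, mul_zero]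
      have ha0' : α' = 0 := by rw [← hα', hv0, mul_zero]
      by_cases hv3 : v 3 = 0
      · have hg0 : γ = 0 := by rw [← hγ, hv3, mul_zero]
        have hg0' : γ' = 0 := by rw [← hγ', hv3, mul_zero]
        exact ⟨ha0.trans ha0'.symm, hb.trans hb'.symm, hg0.trans hg0'.symm⟩
      · have hgJ := hJ.2.2.1 (Or.inr hb) ha0
        have hgJ' := hJ'.2.2.1 (Or.inr hb') ha0'
        dsimp only at hgJ hgJ'
        have hgabs : Complex.abs γ = Complex.abs γ' := by
          rw [← hγ, ← hγ', _root_.map_mul, _root_.map_mul, hll]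
        have hg : γ = γ' := by
          have h1 : γ = (γ.re : ℂ) := Complex.ext rfl (by simp [hgJ.1])
          have h2 : γ' = (γ'.re : ℂ) := Complex.ext rfl (by simp [hgJ'.1])
          rw [h1, h2] at hgabs ⊢
          rw [Complex.abs_ofReal, Complex.abs_ofReal, abs_of_nonneg hgJ.2, abs_of_nonneg hgJ'.2] at hgabs
          exact_mod_cast hgabs
        exact ⟨ha0.trans ha0'.symm, hb.trans hb'.symm, hg⟩
    · have ha : α ≠ 0 := by rw [← hα]; exact mul_ne_zero hl hv0
      have ha' : α' ≠ 0 := by rw [← hα']; exact mul_ne_zero hl' hv0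
      have haJ := hJ.2.1 (Or.inr hb) ha
      have haJ' := hJ'.2.1 (Or.inr hb') ha'
      dsimp only at haJ haJ'
      have haabs : Complex.abs α = Complex.abs α' := by
        rw [← hα, ← hα', _root_.map_mul, _root_.map_mul, hll]
      have hae : α = α' := by
        have h1 : α = (α.re : ℂ) := Complex.ext rfl (by simp [haJ.1])
        have h2 : α' = (α'.re : ℂ) := Complex.ext rfl (by simp [haJ'.1])
        rw [h1, h2] at haabs ⊢
        rw [Complex.abs_ofReal, Complex.abs_ofReal, abs_of_nonneg haJ.2.le, abs_of_nonneg haJ'.2.le] at haabs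
        exact_mod_cast haabs
      have hle : l = l' := by
        have : l * v 0 = l' * v 0 := by rw [hα, hα', hae]
        exact mul_right_cancel₀ hv0 this
      exact ⟨hae, hb.trans hb'.symm, by rw [← hγ, ← hγ', hle]⟩
  · by_cases hp0 : p = 0
    · -- β = β' = 1
      have hb : β = 1 := by
        have h0 : ((1 - β : ℝ) : ℂ) = 0 := by push_cast; rw [hp0] at A1; linear_combination -A1
        have h1 : (1 : ℝ) - β = 0 := by exact_mod_cast h0
        linarith
      have hb' : β' = 1 := by
        have h0 : ((1 - β' : ℝ) : ℂ) = 0 := by push_cast; rw [hp0] at A1'; linear_combination -A1'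
        have h1 : (1 : ℝ) - β' = 0 := by exact_mod_cast h0
        linarith
      have B1 : l * (starRingEnd ℂ) e * q = 2 := by
        rw [hb] at A2; push_cast at A2; linear_combination A2
      have B1' : l' * (starRingEnd ℂ) e' * q = 2 := by
        rw [hb'] at A2'; push_cast at A2'; linear_combination A2'
      have habs : Complex.abs l * Complex.abs q = 2 := by
        have := congrArg Complex.abs B1
        rwa [_root_.map_mul, _root_.map_mul, Complex.abs_conj, hEabs, mul_one, Complex.abs_two] at this
      have habs' : Complex.abs l' * Complex.abs q = 2 := by
        have := congrArg Complex.abs B1'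
        rwa [_root_.map_mul, _root_.map_mul, Complex.abs_conj, hEabs', mul_one, Complex.abs_two] at this
      have habsQ : 0 < Complex.abs q := Complex.abs.pos hq0
      have hll : Complex.abs l = Complex.abs l' :=
        mul_right_cancel₀ (ne_of_gt habsQ) (habs.trans habs'.symm)
      by_cases hv0 : v 0 = 0
      · have ha0 : α = 0 := by rw [← hα, hv0, mul_zero]
        have ha0' : α' = 0 := by rw [← hα', hv0, mul_zero]
        by_cases hv3 : v 3 = 0
        · have hg0 : γ = 0 := by rw [← hγ, hv3, mul_zero]
          have hg0' : γ' = 0 := by rw [← hγ', hv3, mul_zero]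
          exact ⟨ha0.trans ha0'.symm, hb.trans hb'.symm, hg0.trans hg0'.symm⟩
        · have hgJ := hJ.2.2.1 (Or.inl hb) ha0
          have hgJ' := hJ'.2.2.1 (Or.inl hb') ha0'
          dsimp only at hgJ hgJ'
          have hgabs : Complex.abs γ = Complex.abs γ' := by
            rw [← hγ, ← hγ', _root_.map_mul, _root_.map_mul, hll]
          have hg : γ = γ' := by
            have h1 : γ = (γ.re : ℂ) := Complex.ext rfl (by simp [hgJ.1])
            have h2 : γ' = (γ'.re : ℂ) := Complex.ext rfl (by simp [hgJ'.1])
            rw [h1, h2] at hgabs ⊢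
            rw [Complex.abs_ofReal, Complex.abs_ofReal, abs_of_nonneg hgJ.2, abs_of_nonneg hgJ'.2] at hgabs
            exact_mod_cast hgabs
          exact ⟨ha0.trans ha0'.symm, hb.trans hb'.symm, hg⟩
      · have ha : α ≠ 0 := by rw [← hα]; exact mul_ne_zero hl hv0
        have ha' : α' ≠ 0 := by rw [← hα']; exact mul_ne_zero hl' hv0
        have haJ := hJ.2.1 (Or.inl hb) ha
        have haJ' := hJ'.2.1 (Or.inl hb') ha'
        dsimp only at haJ haJ'
        have haabs : Complex.abs α = Complex.abs α' := by
          rw [← hα, ← hα', _root_.map_mul, _root_.map_mul, hll]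
        have hae : α = α' := by
          have h1 : α = (α.re : ℂ) := Complex.ext rfl (by simp [haJ.1])
          have h2 : α' = (α'.re : ℂ) := Complex.ext rfl (by simp [haJ'.1])
          rw [h1, h2] at haabs ⊢
          rw [Complex.abs_ofReal, Complex.abs_ofReal, abs_of_nonneg haJ.2.le, abs_of_nonneg haJ'.2.le] at haabs
          exact_mod_cast haabs
        have hle : l = l' := by
          have : l * v 0 = l' * v 0 := by rw [hα, hα', hae]
          exact mul_right_cancel₀ hv0 this
        exact ⟨hae, hb.trans hb'.symm, by rw [← hγ, ← hγ', hle]⟩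
    · -- p ≠ 0 and q ≠ 0 : strictly interior β
      have hβ1 : β ≠ 1 := by
        intro h; rw [h] at A1; push_cast at A1
        have : l * e * p = 0 := by linear_combination A1
        exact (mul_ne_zero (mul_ne_zero hl hene) hp0) this
      have hβ2 : β ≠ -1 := by
        intro h; rw [h] at A2; push_cast at A2
        have : l * (starRingEnd ℂ) e * q = 0 := by linear_combination A2
        exact (mul_ne_zero (mul_ne_zero hl (star_ne_zero.mpr hene)) hq0) this
      have hβ1' : β' ≠ 1 := by
        intro h; rw [h] at A1'; push_cast at A1'
        have : l' * e' * p = 0 := by linear_combination A1'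
        exact (mul_ne_zero (mul_ne_zero hl' hene') hp0) this
      have hβ2' : β' ≠ -1 := by
        intro h; rw [h] at A2'; push_cast at A2'
        have : l' * (starRingEnd ℂ) e' * q = 0 := by linear_combination A2'
        exact (mul_ne_zero (mul_ne_zero hl' (star_ne_zero.mpr hene')) hq0) this
      have hβint : -1 < β ∧ β < 1 :=
        ⟨lt_of_le_of_ne hJ.1.1 (Ne.symm hβ2), lt_of_le_of_ne hJ.1.2 hβ1⟩
      have hβint' : -1 < β' ∧ β' < 1 :=
        ⟨lt_of_le_of_ne hJ'.1.1 (Ne.symm hβ2'), lt_of_le_of_ne hJ'.1.2 hβ1'⟩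
      -- abs relations
      have c1 : ((1 : ℂ) - (β:ℂ)) = ((1 - β : ℝ) : ℂ) := by push_cast; ring
      have c2 : ((1 : ℂ) + (β:ℂ)) = ((1 + β : ℝ) : ℂ) := by push_cast; ring
      have c1' : ((1 : ℂ) - (β':ℂ)) = ((1 - β' : ℝ) : ℂ) := by push_cast; ring
      have c2' : ((1 : ℂ) + (β':ℂ)) = ((1 + β' : ℝ) : ℂ) := by push_cast; ring
      have habs1 : Complex.abs l * Complex.abs p = 1 - β := by
        have := congrArg Complex.abs A1
        rwa [_root_.map_mul, _root_.map_mul, hEabs, mul_one, c1, Complex.abs_ofReal,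
          abs_of_pos (by linarith [hβint.2])] at this
      have habs2 : Complex.abs l * Complex.abs q = 1 + β := by
        have := congrArg Complex.abs A2
        rwa [_root_.map_mul, _root_.map_mul, Complex.abs_conj, hEabs, mul_one, c2, Complex.abs_ofReal,
          abs_of_pos (by linarith [hβint.1])] at this
      have habs1' : Complex.abs l' * Complex.abs p = 1 - β' := by
        have := congrArg Complex.abs A1'
        rwa [_root_.map_mul, _root_.map_mul, hEabs', mul_one, c1', Complex.abs_ofReal,
          abs_of_pos (by linarith [hβint'.2])] at this
      have habs2' : Complex.abs l' * Complex.abs q = 1 + β' := by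
        have := congrArg Complex.abs A2'
        rwa [_root_.map_mul, _root_.map_mul, Complex.abs_conj, hEabs', mul_one, c2', Complex.abs_ofReal,
          abs_of_pos (by linarith [hβint'.1])] at this
      have habsP : 0 < Complex.abs p := Complex.abs.pos hp0
      have habsQ : 0 < Complex.abs q := Complex.abs.pos hq0
      have k1 : (1 - β) * Complex.abs q = (1 + β) * Complex.abs p := by
        nlinarith [habs1, habs2]
      have k1' : (1 - β') * Complex.abs q = (1 + β') * Complex.abs p := by
        nlinarith [habs1', habs2']
      have hββ : β = β' := by nlinarith [k1, k1', habsP, habsQ]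
      -- cancel to get l e = l' e'
      have hle : l * e = l' * e' := by
        have h : l * e * p = l' * e' * p := by rw [A1, A1', hββ]
        exact mul_right_cancel₀ hp0 h
      have hle2 : l * (starRingEnd ℂ) e = l' * (starRingEnd ℂ) e' := by
        have h : l * (starRingEnd ℂ) e * q = l' * (starRingEnd ℂ) e' * q := by rw [A2, A2', hββ]
        exact mul_right_cancel₀ hq0 h
      have hsq : l * l = l' * l' := by
        have h : l * l * (e * (starRingEnd ℂ) e) = l' * l' * (e' * (starRingEnd ℂ) e') := by
          linear_combination (l * (starRingEnd ℂ) e) * hle + (l' * e') * hle2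
        rwa [he, he', mul_one, mul_one] at h
      have hcases : l = l' ∨ l = -l' := by
        have h : (l - l') * (l + l') = 0 := by linear_combination hsq
        rcases mul_eq_zero.mp h with h | h
        · exact Or.inl (sub_eq_zero.mp h)
        · exact Or.inr (by linear_combination h)
      rcases hcases with hll | hll
      · exact ⟨by rw [← hα, ← hα', hll], hββ, by rw [← hγ, ← hγ', hll]⟩
      · -- l = -l' : derive contradiction or triviality
        by_cases hv0 : v 0 = 0
        · have ha0 : α = 0 := by rw [← hα, hv0, mul_zero]
          have ha0' : α' = 0 := by rw [← hα', hv0, mul_zero]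
          by_cases hv3 : v 3 = 0
          · have hg0 : γ = 0 := by rw [← hγ, hv3, mul_zero]
            have hg0' : γ' = 0 := by rw [← hγ', hv3, mul_zero]
            exact ⟨ha0.trans ha0'.symm, hββ, hg0.trans hg0'.symm⟩
          · exfalso
            have hg : γ = -γ' := by rw [← hγ, ← hγ', hll]; ring
            have hgne' : γ' ≠ 0 := by rw [← hγ']; exact mul_ne_zero hl' hv3
            have hgJ := hJ.2.2.2.2 hβint ha0
            have hgJ' := hJ'.2.2.2.2 hβint' ha0'
            dsimp only at hgJ hgJ'
            rw [hg] at hgJ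
            exact argIco_neg hgne' hgJ' hgJ
        · exfalso
          have hane' : α' ≠ 0 := by rw [← hα']; exact mul_ne_zero hl' hv0
          have ha : α = -α' := by rw [← hα, ← hα', hll]; ring
          have haJ := hJ.2.2.2.1 hβint (by rw [ha]; exact neg_ne_zero.mpr hane')
          have haJ' := hJ'.2.2.2.1 hβint' hane'
          dsimp only at haJ haJ'
          rw [ha] at haJ
          exact argIco_neg hane' haJ' haJ

lemma caseC_exists (v : Fin 4 → ℂ) (hv12 : ¬ (v 1 = 0 ∧ v 2 = 0)) :
    ∃ t : ℂ × ℝ × ℂ, J1C t ∧ ∃ l e : ℂ, e * (starRingEnd ℂ) e = 1 ∧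
      l * e * (v 1 + Complex.I * v 2) = 1 - (t.2.1 : ℂ) ∧
      l * (starRingEnd ℂ) e * (v 1 - Complex.I * v 2) = 1 + (t.2.1 : ℂ) ∧
      l * v 0 = t.1 ∧ l * v 3 = t.2.2 := by
  set p : ℂ := v 1 + Complex.I * v 2 with hpdef
  set q : ℂ := v 1 - Complex.I * v 2 with hqdef
  have hpq : p ≠ 0 ∨ q ≠ 0 := by
    by_contra h
    push_neg at h
    obtain ⟨h1, h2⟩ := h
    rw [hpdef] at h1; rw [hqdef] at h2
    refine hv12 ⟨by linear_combination (h1 + h2) / 2, ?_⟩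
    have hI : Complex.I * v 2 = 0 := by linear_combination (h1 - h2) / 2
    rcases mul_eq_zero.mp hI with h | h
    · exact absurd h Complex.I_ne_zero
    · exact h
  by_cases hq0 : q = 0
  · -- β = -1 regime
    have hp0 : p ≠ 0 := by
      rcases hpq with h | h
      · exact h
      · exact absurd hq0 h
    by_cases hv0 : v 0 ≠ 0
    · obtain ⟨φ, hφ, hφz⟩ := unit_phase ((2 / p) * v 0) (mul_ne_zero (div_ne_zero two_ne_zero hp0) hv0)
      refine ⟨(((Complex.abs ((2 / p) * v 0) : ℝ) : ℂ), -1, (2 / p) * φ * v 3),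
        ⟨?_, ?_, ?_, ?_, ?_⟩, (2 / p) * φ, (starRingEnd ℂ) φ, ?_, ?_, ?_, ?_, ?_⟩
      · constructor <;> norm_num
      · intro _ _
        constructor
        · simp
        · simp only [Complex.ofReal_re]
          exact Complex.abs.pos (mul_ne_zero (div_ne_zero two_ne_zero hp0) hv0)
      · intro _ h
        exfalso
        dsimp only at h
        have : Complex.abs ((2 / p) * v 0) = 0 := by exact_mod_cast h
        exact (Complex.abs.ne_zero (mul_ne_zero (div_ne_zero two_ne_zero hp0) hv0)) this
      · rintro ⟨h, -⟩; exfalso; norm_num at h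
      · rintro ⟨h, -⟩; exfalso; norm_num at h
      · rw [Complex.conj_conj, mul_comm ((starRingEnd ℂ) φ) φ]; exact hφ
      · push_cast
        field_simp
        linear_combination 2 * hφ
      · rw [hq0, mul_zero]; norm_num
      · dsimp only
        linear_combination hφz
      · dsimp only
    · push_neg at hv0
      by_cases hv3 : v 3 ≠ 0
      · obtain ⟨φ, hφ, hφz⟩ := unit_phase ((2 / p) * v 3) (mul_ne_zero (div_ne_zero two_ne_zero hp0) hv3)
        refine ⟨((0 : ℂ), -1, ((Complex.abs ((2 / p) * v 3) : ℝ) : ℂ)),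
          ⟨?_, ?_, ?_, ?_, ?_⟩, (2 / p) * φ, (starRingEnd ℂ) φ, ?_, ?_, ?_, ?_, ?_⟩
        · constructor <;> norm_num
        · intro _ h; exact absurd rfl h
        · intro _ _
          constructor
          · simp
          · simp only [Complex.ofReal_re]
            exact (Complex.abs.nonneg _)
        · rintro ⟨h, -⟩; exfalso; norm_num at h
        · rintro ⟨h, -⟩; exfalso; norm_num at h
        · rw [Complex.conj_conj, mul_comm ((starRingEnd ℂ) φ) φ]; exact hφ
        · push_cast
          field_simp
          linear_combination 2 * hφ
        · rw [hq0, mul_zero]; norm_num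
        · dsimp only; rw [hv0, mul_zero]
        · dsimp only
          linear_combination hφz
      · push_neg at hv3
        refine ⟨((0 : ℂ), -1, (0 : ℂ)), ⟨?_, ?_, ?_, ?_, ?_⟩, 2 / p, 1, ?_, ?_, ?_, ?_, ?_⟩
        · constructor <;> norm_num
        · intro _ h; exact absurd rfl h
        · intro _ _; constructor <;> norm_num
        · rintro ⟨h, -⟩; exfalso; norm_num at h
        · rintro ⟨h, -⟩; exfalso; norm_num at h
        · norm_num
        · push_cast; field_simp; norm_num
        · rw [hq0, mul_zero]; norm_num
        · dsimp only; rw [hv0, mul_zero]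
        · dsimp only; rw [hv3, mul_zero]
  · by_cases hp0 : p = 0
    · -- β = 1 regime
      by_cases hv0 : v 0 ≠ 0
      · obtain ⟨φ, hφ, hφz⟩ := unit_phase ((2 / q) * v 0) (mul_ne_zero (div_ne_zero two_ne_zero hq0) hv0)
        refine ⟨(((Complex.abs ((2 / q) * v 0) : ℝ) : ℂ), 1, (2 / q) * φ * v 3),
          ⟨?_, ?_, ?_, ?_, ?_⟩, (2 / q) * φ, φ, ?_, ?_, ?_, ?_, ?_⟩
        · constructor <;> norm_num
        · intro _ _
          constructor
          · simp
          · simp only [Complex.ofReal_re]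
            exact Complex.abs.pos (mul_ne_zero (div_ne_zero two_ne_zero hq0) hv0)
        · intro _ h
          exfalso
          dsimp only at h
          have : Complex.abs ((2 / q) * v 0) = 0 := by exact_mod_cast h
          exact (Complex.abs.ne_zero (mul_ne_zero (div_ne_zero two_ne_zero hq0) hv0)) this
        · rintro ⟨-, h⟩; exfalso; norm_num at h
        · rintro ⟨-, h⟩; exfalso; norm_num at h
        · exact hφ
        · rw [hp0, mul_zero]; norm_num
        · push_cast
          field_simp
          linear_combination 2 * hφ
        · dsimp only
          linear_combination hφz
        · dsimp only
      · push_neg at hv0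
        by_cases hv3 : v 3 ≠ 0
        · obtain ⟨φ, hφ, hφz⟩ := unit_phase ((2 / q) * v 3) (mul_ne_zero (div_ne_zero two_ne_zero hq0) hv3)
          refine ⟨((0 : ℂ), 1, ((Complex.abs ((2 / q) * v 3) : ℝ) : ℂ)),
            ⟨?_, ?_, ?_, ?_, ?_⟩, (2 / q) * φ, φ, ?_, ?_, ?_, ?_, ?_⟩
          · constructor <;> norm_num
          · intro _ h; exact absurd rfl h
          · intro _ _
            constructor
            · simp
            · simp only [Complex.ofReal_re]
              exact (Complex.abs.nonneg _)
          · rintro ⟨-, h⟩; exfalso; norm_num at h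
          · rintro ⟨-, h⟩; exfalso; norm_num at h
          · exact hφ
          · rw [hp0, mul_zero]; norm_num
          · push_cast
            field_simp
            linear_combination 2 * hφ
          · dsimp only; rw [hv0, mul_zero]
          · dsimp only
            linear_combination hφz
        · push_neg at hv3
          refine ⟨((0 : ℂ), 1, (0 : ℂ)), ⟨?_, ?_, ?_, ?_, ?_⟩, 2 / q, 1, ?_, ?_, ?_, ?_, ?_⟩
          · constructor <;> norm_num
          · intro _ h; exact absurd rfl h
          · intro _ _; constructor <;> norm_num
          · rintro ⟨-, h⟩; exfalso; norm_num at h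
          · rintro ⟨-, h⟩; exfalso; norm_num at h
          · norm_num
          · rw [hp0, mul_zero]; norm_num
          · push_cast; field_simp; norm_num
          · dsimp only; rw [hv0, mul_zero]
          · dsimp only; rw [hv3, mul_zero]
    · -- interior regime
      have habsP : 0 < Complex.abs p := Complex.abs.pos hp0
      have habsQ : 0 < Complex.abs q := Complex.abs.pos hq0
      set r : ℝ := Complex.abs p / Complex.abs q with hrdef
      have hr : 0 < r := div_pos habsP habsQ
      set β : ℝ := (1 - r) / (1 + r) with hβdef
      have hr1 : (0:ℝ) < 1 + r := by linarith
      have hβlt : β < 1 := by rw [hβdef, div_lt_one hr1]; linarith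
      have hβgt : -1 < β := by rw [hβdef, lt_div_iff₀ hr1]; linarith
      have hβm : 1 - β = r * (1 + β) := by
        rw [hβdef]; field_simp; ring
      have h1β : (0:ℝ) < 1 - β := by linarith
      set ζ : ℂ := ((starRingEnd ℂ) p * q) / (((Complex.abs p : ℝ) : ℂ) * ((Complex.abs q : ℝ) : ℂ)) with hζdef
      have hζabs : Complex.abs ζ = 1 := by
        rw [hζdef, map_div₀, _root_.map_mul, _root_.map_mul, Complex.abs_conj,
          Complex.abs_ofReal, Complex.abs_ofReal, abs_of_pos habsP, abs_of_pos habsQ]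
        field_simp
      set e₀ : ℂ := Complex.exp (((ζ.arg / 2 : ℝ) : ℂ) * Complex.I) with he₀def
      have he₀u : e₀ * (starRingEnd ℂ) e₀ = 1 := by
        rw [he₀def, ← Complex.exp_conj]
        rw [_root_.map_mul, Complex.conj_ofReal, Complex.conj_I, ← Complex.exp_add]
        norm_num
      have he₀ne : e₀ ≠ 0 := Complex.exp_ne_zero _
      have he₀sq : e₀ ^ 2 * p = (r : ℂ) * q := by
        have hsq : e₀ ^ 2 = ζ := by
          rw [he₀def, sq, ← Complex.exp_add]
          have : (((ζ.arg / 2 : ℝ) : ℂ) * Complex.I) + (((ζ.arg / 2 : ℝ) : ℂ) * Complex.I) = ((ζ.arg : ℝ) : ℂ) * Complex.I := by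
            push_cast; ring
          rw [this]
          have := Complex.abs_mul_exp_arg_mul_I ζ
          rwa [hζabs, Complex.ofReal_one, one_mul] at this
        rw [hsq, hζdef]
        have hmc : (starRingEnd ℂ) p * p = ((Complex.abs p : ℝ) : ℂ) * ((Complex.abs p : ℝ) : ℂ) := by
          rw [mul_comm, Complex.mul_conj]
          norm_cast
          rw [Complex.normSq_eq_abs]; ring
        have habsPne : ((Complex.abs p : ℝ) : ℂ) ≠ 0 := by exact_mod_cast ne_of_gt habsP
        have habsQne : ((Complex.abs q : ℝ) : ℂ) ≠ 0 := by exact_mod_cast ne_of_gt habsQ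
        rw [hrdef]
        push_cast
        rw [div_mul_eq_mul_div, mul_right_comm, hmc]
        field_simp
      set lam : ℂ := ((1 - β : ℝ) : ℂ) / (e₀ * p) with hlamdef
      have h1βC : ((1 - β : ℝ) : ℂ) ≠ 0 := by exact_mod_cast ne_of_gt h1β
      have hlam0 : lam ≠ 0 := div_ne_zero h1βC (mul_ne_zero he₀ne hp0)
      have keyA1 : lam * e₀ * p = 1 - (β : ℂ) := by
        rw [hlamdef]
        field_simp
        push_cast; ring
      have hconj : (starRingEnd ℂ) e₀ = e₀⁻¹ := by
        field_simp [← he₀u]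
        linear_combination he₀u
      have keyA2 : lam * (starRingEnd ℂ) e₀ * q = 1 + (β : ℂ) := by
        have hrC : ((r : ℝ) : ℂ) ≠ 0 := by exact_mod_cast ne_of_gt hr
        have h2 : lam * (starRingEnd ℂ) e₀ * q * (e₀ ^ 2 * p) = (1 + (β : ℂ)) * (e₀ ^ 2 * p) := by
          have hβmC : (1 : ℂ) - (β : ℂ) = (r : ℂ) * (1 + (β : ℂ)) := by
            have := congrArg (Complex.ofReal) hβm
            push_cast at this
            linear_combination this
          rw [hconj]
          rw [he₀sq]
          rw [hlamdef]
          have hx : e₀ * p * e₀ = e₀ ^ 2 * p := by ring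
          rw [← div_eq_mul_inv, div_div, hx, he₀sq, div_mul_eq_mul_div, div_mul_eq_mul_div,
            div_eq_iff (mul_ne_zero hrC hq0)]
          push_cast
          linear_combination ((r:ℂ) * q^2) * hβmC
        exact mul_right_cancel₀ (mul_ne_zero (pow_ne_zero 2 he₀ne) hp0) h2
      by_cases hv0 : v 0 ≠ 0
      · obtain ⟨σ, hσ, hargσ⟩ := argIco_choice (lam * v 0)
        have hσ2 : σ * σ = 1 := by rcases hσ with rfl | rfl <;> norm_num
        have hσc : (starRingEnd ℂ) σ = σ := by rcases hσ with rfl | rfl <;> simp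
        have hσne : σ ≠ 0 := by rcases hσ with rfl | rfl <;> norm_num
        refine ⟨(σ * (lam * v 0), β, σ * (lam * v 3)), ⟨?_, ?_, ?_, ?_, ?_⟩,
          σ * lam, σ * e₀, ?_, ?_, ?_, ?_, ?_⟩
        · exact ⟨le_of_lt hβgt, le_of_lt hβlt⟩
        · rintro (h | h) _ <;> dsimp only at h <;> exfalso
          · exact absurd h (ne_of_lt hβlt)
          · exact absurd h (ne_of_gt hβgt)
        · rintro (h | h) _ <;> dsimp only at h <;> exfalso
          · exact absurd h (ne_of_lt hβlt)
          · exact absurd h (ne_of_gt hβgt)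
        · intro _ _
          exact hargσ
        · intro _ h
          exact absurd h (mul_ne_zero hσne (mul_ne_zero hlam0 hv0))
        · rw [_root_.map_mul, hσc]
          linear_combination (e₀ * (starRingEnd ℂ) e₀) * hσ2 + he₀u
        · dsimp only
          linear_combination (lam * e₀ * p) * hσ2 + keyA1
        · rw [_root_.map_mul, hσc]
          dsimp only
          linear_combination (lam * (starRingEnd ℂ) e₀ * q) * hσ2 + keyA2
        · dsimp only; ring
        · dsimp only; ring
      · push_neg at hv0
        obtain ⟨σ, hσ, hargσ⟩ := argIco_choice (lam * v 3)
        have hσ2 : σ * σ = 1 := by rcases hσ with rfl | rfl <;> norm_num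
        have hσc : (starRingEnd ℂ) σ = σ := by rcases hσ with rfl | rfl <;> simp
        have hσne : σ ≠ 0 := by rcases hσ with rfl | rfl <;> norm_num
        refine ⟨((0 : ℂ), β, σ * (lam * v 3)), ⟨?_, ?_, ?_, ?_, ?_⟩,
          σ * lam, σ * e₀, ?_, ?_, ?_, ?_, ?_⟩
        · exact ⟨le_of_lt hβgt, le_of_lt hβlt⟩
        · rintro (h | h) _ <;> dsimp only at h <;> exfalso
          · exact absurd h (ne_of_lt hβlt)
          · exact absurd h (ne_of_gt hβgt)
        · rintro (h | h) _ <;> dsimp only at h <;> exfalso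
          · exact absurd h (ne_of_lt hβlt)
          · exact absurd h (ne_of_gt hβgt)
        · intro _ h
          exact absurd rfl h
        · intro _ _
          exact hargσ
        · rw [_root_.map_mul, hσc]
          linear_combination (e₀ * (starRingEnd ℂ) e₀) * hσ2 + he₀u
        · dsimp only
          linear_combination (lam * e₀ * p) * hσ2 + keyA1
        · rw [_root_.map_mul, hσc]
          dsimp only
          linear_combination (lam * (starRingEnd ℂ) e₀ * q) * hσ2 + keyA2
        · dsimp only; rw [hv0]; ring
        · dsimp only; ring

/-- For every nonzero `v ∈ ℂ⁴`, exactly one of the following holds: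
(A) `v ∈ span ℂ {e₁}`; (B) `v ∈ span ℂ {(α,0,0,1)}` for a unique `α ∈ ℂ`;
(C) there is a unique `(α, β, γ) ∈ J^(1C)` with `λ·((1⊕R⊕1)·v) = (α, 1, iβ, γ)`
for some `λ ∈ ℂ` and `R ∈ SO(2)`. -/
theorem stmt12 (v : Fin 4 → ℂ) (hv : v ≠ 0) :
    let A : Prop := v ∈ Submodule.span ℂ ({![1, 0, 0, 0]} : Set (Fin 4 → ℂ))
    let B : Prop := ∃! α : ℂ, v ∈ Submodule.span ℂ ({![α, 0, 0, 1]} : Set (Fin 4 → ℂ))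
    let C : Prop := ∃! p : ℂ × ℝ × ℂ, J1C p ∧
      ∃ (l : ℂ) (R : Matrix (Fin 2) (Fin 2) ℝ), Rᵀ * R = 1 ∧ R.det = 1 ∧
        l • (((oneOplus2Oplus1 R).map Complex.ofReal) *ᵥ v) =
          ![p.1, 1, Complex.I * (p.2.1 : ℂ), p.2.2]
    (A ∧ ¬B ∧ ¬C) ∨ (¬A ∧ B ∧ ¬C) ∨ (¬A ∧ ¬B ∧ C) := by
  intro A B C
  have hCiff : C ↔ ∃! t : ℂ × ℝ × ℂ, J1C t ∧ ∃ l e : ℂ, e * (starRingEnd ℂ) e = 1 ∧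
      l * e * (v 1 + Complex.I * v 2) = 1 - (t.2.1 : ℂ) ∧
      l * (starRingEnd ℂ) e * (v 1 - Complex.I * v 2) = 1 + (t.2.1 : ℂ) ∧
      l * v 0 = t.1 ∧ l * v 3 = t.2.2 :=
    existsUnique_congr (fun t => and_congr_right fun _ => matrix_iff v t)
  by_cases h12 : v 1 = 0 ∧ v 2 = 0
  · have hnC : ¬C := by
      rw [hCiff]
      rintro ⟨t, ⟨-, l, e, -, A1, A2, -, -⟩, -⟩
      rw [h12.1, h12.2] at A1 A2
      have h2 : (2 : ℂ) = 0 := by linear_combination -A1 - A2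
      norm_num at h2
    by_cases h3 : v 3 = 0
    · left
      refine ⟨?_, ?_, hnC⟩
      · show v ∈ Submodule.span ℂ ({![1, 0, 0, 0]} : Set (Fin 4 → ℂ))
        rw [Submodule.mem_span_singleton]
        refine ⟨v 0, ?_⟩
        funext i
        fin_cases i <;> simp [h12.1, h12.2, h3]
      · rintro ⟨α, hmem, -⟩
        obtain ⟨c, hc⟩ := Submodule.mem_span_singleton.mp hmem
        have hc3 := congrFun hc 3
        simp at hc3
        have hc0 := congrFun hc 0
        simp at hc0
        apply hv
        have hv0 : v 0 = 0 := by rw [← hc0, hc3, h3, zero_mul]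
        funext i
        fin_cases i <;> simp [h12.1, h12.2, h3, hv0]
    · right; left
      refine ⟨?_, ?_, hnC⟩
      · intro hA
        obtain ⟨c, hc⟩ := Submodule.mem_span_singleton.mp hA
        have hc3 := congrFun hc 3
        simp at hc3
        exact h3 hc3.symm
      · refine ⟨v 0 / v 3, ?_, ?_⟩
        · show v ∈ Submodule.span ℂ ({![v 0 / v 3, 0, 0, 1]} : Set (Fin 4 → ℂ))
          rw [Submodule.mem_span_singleton]
          refine ⟨v 3, ?_⟩
          funext i
          fin_cases i <;> simp [h12.1, h12.2]
          field_simp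
        · intro y hy
          obtain ⟨c, hc⟩ := Submodule.mem_span_singleton.mp hy
          have hc3 := congrFun hc 3
          simp at hc3
          have hc0 := congrFun hc 0
          simp at hc0
          rw [eq_div_iff h3]
          linear_combination hc0 - y * hc3
  · right; right
    have hnA : ¬A := by
      intro hA
      obtain ⟨c, hc⟩ := Submodule.mem_span_singleton.mp hA
      have hc1 := congrFun hc 1
      have hc2 := congrFun hc 2
      simp at hc1 hc2
      exact h12 ⟨hc1.symm, hc2.symm⟩
    refine ⟨hnA, ?_, ?_⟩
    · rintro ⟨α, hmem, -⟩
      obtain ⟨c, hc⟩ := Submodule.mem_span_singleton.mp hmem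
      have hc1 := congrFun hc 1
      have hc2 := congrFun hc 2
      simp at hc1 hc2
      exact h12 ⟨hc1.symm, hc2.symm⟩
    · rw [hCiff]
      obtain ⟨t, ht⟩ := caseC_exists v h12
      exact ⟨t, ht, fun t' ht' => caseC_uniq v t' t ht' ht⟩
end
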